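/- arXiv:1904.08253 — 3 statements merged into one kernel-verified Lean document; each statement's English description precedes it below -/
import Mathlib

section
/- Let K be a 2-complex with edge set X and let Y be a proper subset of X. If K is DR directed away from Y, then K is DR relative to K_Y, where K_Y is the subcomplex with edge set Y containing exactly those 2-cells of K all of whose boundary edges lie in Y. -/
set_option autoImplicit false
set_option linter.unusedVariables false

open scoped Classical

/-- A combinatorial 2-complex: vertices, oriented edges with a fixed-point free
orientation-reversing involution `bar`, and 2-cells attached along closed edge paths. -/
structure TwoComplex where
  V : Type
  E : Type
  bar : E → E
  bar_bar : ∀ e, bar (bar e) = e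
  bar_ne : ∀ e, bar e ≠ e
  ini : E → V
  F : Type
  att : F → List E
  att_pos : ∀ d, 0 < (att d).length
  att_closed : ∀ (d : F) (i : Fin (att d).length),
      ini (bar ((att d).get i)) =
        ini ((att d).get ⟨((i : ℕ) + 1) % (att d).length, Nat.mod_lt _ (att_pos d)⟩)

namespace TwoComplex

variable (L : TwoComplex)

/-- Terminal vertex of an oriented edge. -/
def ter (e : L.E) : L.V := L.ini (L.bar e)

/-- Connectivity of the underlying 1-skeleton. -/
def Conn : Prop :=
  ∀ u v : L.V, Relation.ReflTransGen (fun a b => ∃ e : L.E, L.ini e = a ∧ L.ter e = b) u v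

/-- A corner of a 2-cell: a 2-cell together with a position in its boundary path.
The corner `⟨d, i⟩` sits between the `i`-th and `(i+1)`-th boundary edges. -/
def Cor : Type := Σ d : L.F, Fin (L.att d).length

/-- The boundary edge entering the corner. -/
def corA (c : L.Cor) : L.E := (L.att c.1).get c.2

/-- The boundary edge leaving the corner. -/
def corB (c : L.Cor) : L.E :=
  (L.att c.1).get ⟨((c.2 : ℕ) + 1) % (L.att c.1).length, Nat.mod_lt _ (L.att_pos c.1)⟩

/-- The vertex at which a corner sits. -/
def corV (c : L.Cor) : L.V := L.ini (L.corB c)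

/-- An oriented edge lies on the boundary of some 2-cell. -/
def OnFace (e : L.E) : Prop := ∃ d : L.F, e ∈ L.att d

/-- A combinatorial (cell-structured) 2-sphere: finite, connected, every oriented edge
occurs exactly once among the boundaries of the 2-cells (closed oriented surface),
and the Euler characteristic is 2. -/
def IsSphere : Prop :=
  Finite L.V ∧ Finite L.E ∧ Finite L.F ∧ Nonempty L.F ∧ L.Conn ∧
    (∀ e : L.E, ∃! c : L.Cor, L.corA c = e) ∧
    2 * (Nat.card L.V + Nat.card L.F) = Nat.card L.E + 4

/-- A combinatorial (cell-structured) disc: finite, connected, every oriented edge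
occurs at most once among the boundaries of the 2-cells, Euler characteristic 1. -/
def IsDisc : Prop :=
  Finite L.V ∧ Finite L.E ∧ Finite L.F ∧ L.Conn ∧
    (∀ c c' : L.Cor, L.corA c = L.corA c' → c = c') ∧
    2 * (Nat.card L.V + Nat.card L.F) = Nat.card L.E + 2

/-- A closed edge path. -/
def ClosedPath (w : List L.E) : Prop :=
  ∃ h : 0 < w.length, ∀ i : Fin w.length,
    L.ter (w.get i) = L.ini (w.get ⟨((i : ℕ) + 1) % w.length, Nat.mod_lt _ h⟩)

/-- The boundary cycle of a disc: a closed edge path without repetitions consisting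
exactly of those oriented edges having a 2-cell only on one side. -/
def IsBoundaryCycle (bd : List L.E) : Prop :=
  L.ClosedPath bd ∧ bd.Nodup ∧
    ∀ e : L.E, e ∈ bd ↔ (¬ L.OnFace e ∧ L.OnFace (L.bar e))

/-- All attaching maps are cyclically reduced. -/
def CyclicallyReduced : Prop := ∀ c : L.Cor, L.corB c ≠ L.bar (L.corA c)

/-- A free edge: it occurs (in either orientation) exactly once in the boundary of the 2-cells. -/
def FreeEdge (e : L.E) : Prop :=
  ∃! c : L.Cor, L.corA c = e ∨ L.corA c = L.bar e

/-- A closed 2-complex has no free edges. -/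
def IsClosed : Prop := ∀ e : L.E, ¬ L.FreeEdge e

/-- A combinatorial closed orientable surface: finite and every oriented edge occurs
exactly once among the boundaries of the 2-cells. -/
def IsClosedOrientedSurface : Prop :=
  Finite L.V ∧ Finite L.E ∧ Finite L.F ∧ Nonempty L.F ∧
    (∀ e : L.E, ∃! c : L.Cor, L.corA c = e)

end TwoComplex

/-- A combinatorial map between 2-complexes (maps open cells homeomorphically to open cells). -/
structure CombMap (C L : TwoComplex) where
  mapV : C.V → L.V
  mapE : C.E → L.E
  mapF : C.F → L.F
  map_bar : ∀ e, mapE (C.bar e) = L.bar (mapE e)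
  map_ini : ∀ e, mapV (C.ini e) = L.ini (mapE e)
  map_att : ∀ d, (C.att d).map mapE = L.att (mapF d)

/-- A subcomplex of a 2-complex. -/
structure Subcomplex (L : TwoComplex) where
  vs : Set L.V
  es : Set L.E
  fs : Set L.F
  bar_mem : ∀ e, e ∈ es → L.bar e ∈ es
  ini_mem : ∀ e, e ∈ es → L.ini e ∈ vs
  att_mem : ∀ d, d ∈ fs → ∀ e, e ∈ L.att d → e ∈ es

/-- The whole complex as a subcomplex of itself. -/
def Subcomplex.top (L : TwoComplex) : Subcomplex L :=
  ⟨Set.univ, Set.univ, Set.univ, fun _ _ => Set.mem_univ _, fun _ _ => Set.mem_univ _,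
    fun _ _ _ _ => Set.mem_univ _⟩

/-- A full subcomplex: every 2-cell all of whose boundary edges lie in the subcomplex
belongs to the subcomplex. -/
def Subcomplex.Full {L : TwoComplex} (K : Subcomplex L) : Prop :=
  ∀ d : L.F, (∀ e ∈ L.att d, e ∈ K.es) → d ∈ K.fs

/-- The image of a combinatorial map is contained in a subcomplex. -/
def MapsInto {C L : TwoComplex} (f : CombMap C L) (K : Subcomplex L) : Prop :=
  (∀ v, f.mapV v ∈ K.vs) ∧ (∀ e, f.mapE e ∈ K.es) ∧ (∀ d, f.mapF d ∈ K.fs)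

/-- The corners `c₁, c₂` of the diagram `f : C → L` form a folding pair at the vertex `v`:
they map to the same corner of `L` with cancelling orientations. -/
def FoldingPairAt {C L : TwoComplex} (f : CombMap C L) (v : C.V) (c₁ c₂ : C.Cor) : Prop :=
  C.corV c₁ = v ∧ C.corV c₂ = v ∧ c₁ ≠ c₂ ∧
    f.mapF c₁.1 = f.mapF c₂.1 ∧
    f.mapE (C.corA c₁) = L.bar (f.mapE (C.corB c₂)) ∧
    f.mapE (C.corB c₁) = L.bar (f.mapE (C.corA c₂))

/-- A folding vertex of a diagram. -/
def FoldingVertex {C L : TwoComplex} (f : CombMap C L) (v : C.V) : Prop :=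
  ∃ c₁ c₂, FoldingPairAt f v c₁ c₂

/-- The edge `e` of the diagram `f : C → L` is a folding edge, witnessed by the corners
`c₁, c₂` of the two 2-cells adjacent along `e`, which map to the same 2-cell of `L`
matched along `f(e)` with cancelling orientations. -/
def FoldingEdgeAt {C L : TwoComplex} (f : CombMap C L) (e : C.E) (c₁ c₂ : C.Cor) : Prop :=
  C.corB c₁ = e ∧ C.corA c₂ = C.bar e ∧ c₁ ≠ c₂ ∧
    f.mapF c₁.1 = f.mapF c₂.1 ∧
    f.mapE (C.corA c₁) = L.bar (f.mapE (C.corB c₂))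

/-- A folding edge of a diagram. -/
def FoldingEdge {C L : TwoComplex} (f : CombMap C L) (e : C.E) : Prop :=
  ∃ c₁ c₂, FoldingEdgeAt f e c₁ c₂

/-- A diagram is vertex reduced if it has no folding vertex. -/
def VertexReduced {C L : TwoComplex} (f : CombMap C L) : Prop := ¬ ∃ v, FoldingVertex f v

/-- A diagram is reduced if it has no folding edge. -/
def Reduced {C L : TwoComplex} (f : CombMap C L) : Prop := ¬ ∃ e, FoldingEdge f e

/-- `L` is vertex aspherical: every spherical diagram over `L` has a folding vertex. -/
def VAabs (L : TwoComplex) : Prop :=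
  ∀ (C : TwoComplex) (f : CombMap C L), C.IsSphere → ∃ v, FoldingVertex f v

/-- The subcomplex `K` is vertex aspherical: every spherical diagram over `L` with image in `K`
(i.e. every spherical diagram over `K`) has a folding vertex. -/
def SubVA {L : TwoComplex} (K : Subcomplex L) : Prop :=
  ∀ (C : TwoComplex) (f : CombMap C L), C.IsSphere → MapsInto f K → ∃ v, FoldingVertex f v

/-- `L` is VA relative to `K`: every spherical diagram over `L` whose image is not contained
in `K` has a folding vertex whose folding pair of 2-cells lies in `L − K`. -/
def VArel (L : TwoComplex) (K : Subcomplex L) : Prop :=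
  ∀ (C : TwoComplex) (f : CombMap C L), C.IsSphere → ¬ MapsInto f K →
    ∃ v c₁ c₂, FoldingPairAt f v c₁ c₂ ∧ f.mapF c₁.1 ∉ K.fs ∧ f.mapF c₂.1 ∉ K.fs

/-- `L` is diagrammatically reducible. -/
def DRabs (L : TwoComplex) : Prop :=
  ∀ (C : TwoComplex) (f : CombMap C L), C.IsSphere → ∃ e, FoldingEdge f e

/-- The subcomplex `K` is diagrammatically reducible. -/
def SubDR {L : TwoComplex} (K : Subcomplex L) : Prop :=
  ∀ (C : TwoComplex) (f : CombMap C L), C.IsSphere → MapsInto f K → ∃ e, FoldingEdge f e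

/-- `L` is DR relative to `K`: every spherical diagram over `L` whose image is not contained
in `K` has a folding edge whose adjacent pair of 2-cells lies in `L − K`. -/
def DRrel (L : TwoComplex) (K : Subcomplex L) : Prop :=
  ∀ (C : TwoComplex) (f : CombMap C L), C.IsSphere → ¬ MapsInto f K →
    ∃ e c₁ c₂, FoldingEdgeAt f e c₁ c₂ ∧ f.mapF c₁.1 ∉ K.fs ∧ f.mapF c₂.1 ∉ K.fs

/-- `L` is DR directed away from the edge set `Y`: every spherical diagram containing an edge
labeled outside `Y` has a folding edge labeled outside `Y`. -/
def DRdirAway (L : TwoComplex) (Y : Set L.E) : Prop :=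
  ∀ (C : TwoComplex) (f : CombMap C L), C.IsSphere →
    (∃ e, f.mapE e ∉ Y) → ∃ e, FoldingEdge f e ∧ f.mapE e ∉ Y

/-- The subcomplex `K_Y` spanned by a bar-closed edge set `Y`: it contains exactly those
2-cells all of whose boundary edges lie in `Y`. -/
def TwoComplex.subOf (L : TwoComplex) (Y : Set L.E) (hbar : ∀ e ∈ Y, L.bar e ∈ Y) :
    Subcomplex L where
  vs := Set.univ
  es := Y
  fs := {d | ∀ e ∈ L.att d, e ∈ Y}
  bar_mem := hbar
  ini_mem := fun _ _ => Set.mem_univ _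
  att_mem := fun d hd e he => hd e he

/-- The closed edge path `w` in `L` bounds a disc diagram mapping into the subcomplex `S`
(i.e. it represents the trivial element of `π₁(S)`). -/
def NullIn (L : TwoComplex) (S : Subcomplex L) (w : List L.E) : Prop :=
  ∃ (D : TwoComplex) (f : CombMap D L) (bd : List D.E),
    D.IsDisc ∧ D.IsBoundaryCycle bd ∧ bd.map f.mapE = w ∧ MapsInto f S

/-- The union of a finite family of subcomplexes. -/
def unionSub {L : TwoComplex} {n : ℕ} (Ks : Fin n → Subcomplex L) : Subcomplex L where
  vs := ⋃ i, (Ks i).vs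
  es := ⋃ i, (Ks i).es
  fs := ⋃ i, (Ks i).fs
  bar_mem := by
    intro e he
    rcases Set.mem_iUnion.1 he with ⟨i, hi⟩
    exact Set.mem_iUnion.2 ⟨i, (Ks i).bar_mem e hi⟩
  ini_mem := by
    intro e he
    rcases Set.mem_iUnion.1 he with ⟨i, hi⟩
    exact Set.mem_iUnion.2 ⟨i, (Ks i).ini_mem e hi⟩
  att_mem := by
    intro d hd e he
    rcases Set.mem_iUnion.1 hd with ⟨i, hi⟩
    exact Set.mem_iUnion.2 ⟨i, (Ks i).att_mem d hi e he⟩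

/-- The preimage of a subcomplex under a combinatorial map. -/
def Subcomplex.preimg {L' L : TwoComplex} (p : CombMap L' L) (K : Subcomplex L) :
    Subcomplex L' where
  vs := {v | p.mapV v ∈ K.vs}
  es := {e | p.mapE e ∈ K.es}
  fs := {d | p.mapF d ∈ K.fs}
  bar_mem := fun e he => by
    have := K.bar_mem _ he
    simpa [p.map_bar] using this
  ini_mem := fun e he => by
    have := K.ini_mem _ he
    simpa [p.map_ini] using this
  att_mem := fun d hd e he => by
    have : p.mapE e ∈ L.att (p.mapF d) := by
      rw [← p.map_att]; exact List.mem_map_of_mem he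
    exact K.att_mem _ hd _ this

/-- The union of a subcomplex with the whole 1-skeleton. -/
def unionOneSkel {L : TwoComplex} (S : Subcomplex L) : Subcomplex L :=
  ⟨Set.univ, Set.univ, S.fs, fun _ _ => Set.mem_univ _, fun _ _ => Set.mem_univ _,
    fun _ _ _ _ => Set.mem_univ _⟩

/-- An edge which is free in the subcomplex `M`. -/
def FreeEdgeIn (L : TwoComplex) (M : Subcomplex L) (e : L.E) : Prop :=
  e ∈ M.es ∧
    ∃! c : {c : L.Cor // c.1 ∈ M.fs}, L.corA c.1 = e ∨ L.corA c.1 = L.bar e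

/-- An elementary collapse between subcomplexes: remove a free edge together with the unique
2-cell containing it, or remove a free vertex together with the unique edge containing it. -/
def CollapseStep (L : TwoComplex) (M M' : Subcomplex L) : Prop :=
  (∃ (e : L.E) (d : L.F), d ∈ M.fs ∧ FreeEdgeIn L M e ∧
      (e ∈ L.att d ∨ L.bar e ∈ L.att d) ∧
      M'.fs = M.fs \ {d} ∧ M'.es = M.es \ {e, L.bar e} ∧ M'.vs = M.vs) ∨
  (∃ (v : L.V) (e : L.E), v ∈ M.vs ∧ e ∈ M.es ∧ L.ini e = v ∧ L.ter e ≠ v ∧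
      (∀ e' ∈ M.es, L.ini e' = v → e' = e) ∧
      (∀ d ∈ M.fs, e ∉ L.att d ∧ L.bar e ∉ L.att d) ∧
      M'.vs = M.vs \ {v} ∧ M'.es = M.es \ {e, L.bar e} ∧ M'.fs = M.fs)

/-- `M` collapses into `N`: a sequence of elementary collapses transforms `M` into a
subcomplex contained in `N`. -/
def CollapsesInto (L : TwoComplex) (M N : Subcomplex L) : Prop :=
  ∃ M' : Subcomplex L, Relation.ReflTransGen (CollapseStep L) M M' ∧
    M'.vs ⊆ N.vs ∧ M'.es ⊆ N.es ∧ M'.fs ⊆ N.fs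

/-- A combinatorial covering map: surjective, locally bijective on stars of vertices
and on corners. -/
def IsCovering {L' L : TwoComplex} (p : CombMap L' L) : Prop :=
  Function.Surjective p.mapV ∧
    (∀ (v' : L'.V) (e : L.E), L.ini e = p.mapV v' →
      ∃! e' : L'.E, L'.ini e' = v' ∧ p.mapE e' = e) ∧
    (∀ (e' : L'.E) (c : L.Cor), L.corB c = p.mapE e' →
      ∃! c' : L'.Cor, p.mapF c'.1 = c.1 ∧ L'.corB c' = e' ∧ ((c'.2 : ℕ) = (c.2 : ℕ)))

/-- A universal covering: a covering with connected, simply connected total complex. -/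
def IsUniversalCovering {L' L : TwoComplex} (p : CombMap L' L) : Prop :=
  IsCovering p ∧ L'.Conn ∧
    ∀ w : List L'.E, L'.ClosedPath w → NullIn L' (Subcomplex.top L') w

/-! ### Graphs -/

/-- A combinatorial graph with oriented edges. -/
structure OGraph where
  V : Type
  E : Type
  bar : E → E
  bar_bar : ∀ e, bar (bar e) = e
  bar_ne : ∀ e, bar e ≠ e
  ini : E → V

namespace OGraph

variable (G : OGraph)

def ter (e : G.E) : G.V := G.ini (G.bar e)

def ClosedPath (w : List G.E) : Prop :=
  ∃ h : 0 < w.length, ∀ i : Fin w.length,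
    G.ter (w.get i) = G.ini (w.get ⟨((i : ℕ) + 1) % w.length, Nat.mod_lt _ h⟩)

/-- A cycle: a nonempty closed cyclically reduced edge path. -/
def ReducedCycle (w : List G.E) : Prop :=
  G.ClosedPath w ∧ ∃ h : 0 < w.length, ∀ i : Fin w.length,
    w.get ⟨((i : ℕ) + 1) % w.length, Nat.mod_lt _ h⟩ ≠ G.bar (w.get i)

/-- A homology reduced cycle: a closed path containing no pair of opposite edges. -/
def HomReducedCycle (w : List G.E) : Prop :=
  G.ClosedPath w ∧ ∀ i j : Fin w.length, w.get j ≠ G.bar (w.get i)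

def IsForest : Prop := ¬ ∃ w, G.ReducedCycle w

def Conn : Prop :=
  ∀ u v : G.V, Relation.ReflTransGen (fun a b => ∃ e : G.E, G.ini e = a ∧ G.ter e = b) u v

def IsTree : Prop := G.Conn ∧ G.IsForest

end OGraph

/-- The quotient graph obtained by collapsing each of the disjoint subgraphs
`(Vs i, Es i)` to a single vertex. -/
def OGraph.quot {n : ℕ} (G : OGraph) (Vs : Fin n → Set G.V) (Es : Fin n → Set G.E)
    (hbar : ∀ i e, e ∈ Es i → G.bar e ∈ Es i) : OGraph where
  V := Quot (fun u v : G.V => ∃ i, u ∈ Vs i ∧ v ∈ Vs i)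
  E := {e : G.E // ∀ i, e ∉ Es i}
  bar := fun e => ⟨G.bar e.1, fun i h => e.2 i (by
    have := hbar i _ h
    rwa [G.bar_bar] at this)⟩
  bar_bar := fun e => Subtype.ext (G.bar_bar e.1)
  bar_ne := fun e h => G.bar_ne e.1 (congrArg Subtype.val h)
  ini := fun e => Quot.mk _ (G.ini e.1)

/-- The edge path `w` is trivial modulo the subgraph edges `hatE`: it reduces to the empty
path by deleting edges of `hatE`, cancelling adjacent inverse pairs, and cyclic rotation. -/
inductive TrivMod (G : OGraph) (hatE : Set G.E) : List G.E → Prop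
  | nil : TrivMod G hatE []
  | hatdel (l₁ l₂ : List G.E) (e : G.E) (he : e ∈ hatE) (h : TrivMod G hatE (l₁ ++ l₂)) :
      TrivMod G hatE (l₁ ++ e :: l₂)
  | cancel (l₁ l₂ : List G.E) (e : G.E) (h : TrivMod G hatE (l₁ ++ l₂)) :
      TrivMod G hatE (l₁ ++ e :: G.bar e :: l₂)
  | rot (l : List G.E) (e : G.E) (h : TrivMod G hatE (e :: l)) :
      TrivMod G hatE (l ++ [e])

/-- The link graph of a 2-complex. Its vertices are the edge germs (an oriented edge `e`
stands for its germ at its initial vertex) and its edges are the corners of the 2-cells.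
The corner `⟨d,i⟩` joins the germ of `bar (eᵢ)` to the germ of `e_{i+1}`. -/
def TwoComplex.LinkGraph (L : TwoComplex) : OGraph where
  V := L.E
  E := L.Cor × Bool
  bar := fun c => (c.1, !c.2)
  bar_bar := by intro c; simp
  bar_ne := fun c h => Bool.not_ne_self c.2 (congrArg Prod.snd h)
  ini := fun c => if c.2 then L.bar (L.corA c.1) else L.corB c.1

/-- The positive link of a 2-complex with respect to an orientation `pos` of its edges:
the full subgraph of the link graph on the germs lying in `pos`. -/
def TwoComplex.PosLink (L : TwoComplex) (pos : Set L.E) : OGraph where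
  V := {e : L.E // e ∈ pos}
  E := {cb : L.Cor × Bool // L.bar (L.corA cb.1) ∈ pos ∧ L.corB cb.1 ∈ pos}
  bar := fun cb => ⟨(cb.1.1, !cb.1.2), cb.2⟩
  bar_bar := fun cb => Subtype.ext (by simp)
  bar_ne := fun cb h => Bool.not_ne_self cb.1.2 (congrArg (fun x => x.1.2) h)
  ini := fun cb =>
    if cb.1.2 then ⟨L.bar (L.corA cb.1.1), cb.2.1⟩ else ⟨L.corB cb.1.1, cb.2.2⟩

/-! ### Presentations and their standard 2-complexes -/

/-- A word in generators and inverses. -/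
abbrev Word (X : Type) := List (X × Bool)

/-- The inverse of a word. -/
def wordInv {X : Type} (w : Word X) : Word X := (w.map (fun p => (p.1, !p.2))).reverse

/-- A word is cyclically reduced. -/
def CyclRedWord {X : Type} (r : Word X) : Prop :=
  ∃ h : 0 < r.length, ∀ i : Fin r.length,
    r.get ⟨((i : ℕ) + 1) % r.length, Nat.mod_lt _ h⟩ ≠ ((r.get i).1, !(r.get i).2)

/-- The standard 2-complex of a presentation: one vertex, one edge pair per generator,
one 2-cell per relator. -/
def PresCpx (X : Type) (R : List (Word X)) (hR : ∀ r ∈ R, r ≠ []) : TwoComplex where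
  V := Unit
  E := X × Bool
  bar := fun e => (e.1, !e.2)
  bar_bar := by intro e; simp
  bar_ne := fun e h => Bool.not_ne_self e.2 (congrArg Prod.snd h)
  ini := fun _ => ()
  F := Fin R.length
  att := fun i => R.get i
  att_pos := fun i => List.length_pos_iff.2 (hR _ (List.get_mem R i))
  att_closed := fun _ _ => rfl

/-- The relator set of a presentation inside the free group. -/
def presRels (X : Type) (R : List (Word X)) : Set (FreeGroup X) :=
  {g | ∃ r ∈ R, g = FreeGroup.mk r}

/-- `K` is DR in all directions: for every edge label `x`, every spherical diagram containing
an edge labeled `x` contains a folding edge labeled `x`. -/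
def DRinAll (K : TwoComplex) : Prop :=
  ∀ x : K.E, ∀ (C : TwoComplex) (f : CombMap C K), C.IsSphere →
    (∃ e, f.mapE e = x ∨ f.mapE e = K.bar x) →
    ∃ e, FoldingEdge f e ∧ (f.mapE e = x ∨ f.mapE e = K.bar x)

/-! ### Labeled oriented trees -/

/-- The relator word `x z (z y)⁻¹ = x z y⁻¹ z⁻¹` of a LOT edge from `x` to `y` labeled `z`. -/
def lotRel {V : Type} (e : V × V × V) : Word V :=
  [(e.1, true), (e.2.2, true), (e.2.1, false), (e.2.2, false)]

lemma lotRel_ne {V : Type} : ∀ r ∈ (fun (ed : List (V × V × V)) => ed.map lotRel) [], r ≠ [] := by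
  intro r hr; simp at hr

lemma lotRel_ne' {V : Type} (ed : List (V × V × V)) : ∀ r ∈ ed.map lotRel, r ≠ [] := by
  intro r hr
  rcases List.mem_map.1 hr with ⟨e, _, rfl⟩
  simp [lotRel]

/-- The LOT complex of a labeled oriented graph, given by its list of
(source, target, label) edges. -/
def lotCpx (V : Type) (ed : List (V × V × V)) : TwoComplex :=
  PresCpx V (ed.map lotRel) (lotRel_ne' ed)

/-- The underlying oriented graph of a labeled oriented graph. -/
def lotGraph (V : Type) (ed : List (V × V × V)) : OGraph where
  V := V
  E := Fin ed.length × Bool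
  bar := fun e => (e.1, !e.2)
  bar_bar := by intro e; simp
  bar_ne := fun e h => Bool.not_ne_self e.2 (congrArg Prod.snd h)
  ini := fun e => if e.2 then (ed.get e.1).1 else (ed.get e.1).2.1

/-- A labeled oriented graph is a LOT (labeled oriented tree) if its underlying graph
is a tree. -/
def IsLOT (V : Type) (ed : List (V × V × V)) : Prop := (lotGraph V ed).IsTree

/-- A labeled oriented graph is compressed: no edge is labeled by one of its own vertices. -/
def LOTCompressed (V : Type) (ed : List (V × V × V)) : Prop :=
  ∀ e ∈ ed, e.2.2 ≠ e.1 ∧ e.2.2 ≠ e.2.1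

/-- If `K` is DR directed away from a proper bar-closed edge set `Y`,
then `K` is DR relative to the subcomplex `K_Y`. -/
theorem dirDR_implies_relDR (L : TwoComplex) (Y : Set L.E)
    (hbar : ∀ e ∈ Y, L.bar e ∈ Y) (hproper : Y ≠ Set.univ)
    (hdir : DRdirAway L Y) : DRrel L (L.subOf Y hbar) := by
  intro C f hC hnot
  have hex : ∃ e : C.E, f.mapE e ∉ Y := by
    by_contra h
    push_neg at h
    apply hnot
    refine ⟨fun v => Set.mem_univ _, fun e => h e, ?_⟩
    intro d e he
    rw [← f.map_att] at he
    rcases List.mem_map.1 he with ⟨e', _, rfl⟩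
    exact h e'
  obtain ⟨e, ⟨c₁, c₂, hfe⟩, hnY⟩ := hdir C f hC hex
  refine ⟨e, c₁, c₂, hfe, ?_, ?_⟩
  · intro hmem
    apply hnY
    have h1 : C.corB c₁ ∈ C.att c₁.1 := List.get_mem _ _
    rw [hfe.1] at h1
    have h2 : f.mapE e ∈ L.att (f.mapF c₁.1) := by
      rw [← f.map_att]; exact List.mem_map_of_mem h1
    exact hmem _ h2
  · intro hmem
    have h1 : C.corA c₂ ∈ C.att c₂.1 := List.get_mem _ _
    rw [hfe.2.1] at h1
    have h2 : f.mapE (C.bar e) ∈ L.att (f.mapF c₂.1) := by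
      rw [← f.map_att]; exact List.mem_map_of_mem h1
    have h3 := hmem _ h2
    rw [f.map_bar] at h3
    have h4 := hbar _ h3
    rw [L.bar_bar] at h4
    exact hnY h4
end

section
/- (Combinatorial Gauss–Bonnet for the relative weight test) Let C be a cell decomposition of the 2-sphere with a real weight ω(c) assigned to each corner c of each 2-cell. If for every 2-cell d with q corners the sum of the weights of its corners is at most q − 2, and for every vertex v the sum of the weights of the corners around v is at least 2, then a contradiction follows; i.e., no such weight assignment exists. -/
set_option autoImplicit false
set_option linter.unusedVariables false

open scoped Classical

/-- (Combinatorial Gauss–Bonnet.) Let `C` be a cell decomposition of the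
2-sphere with a real weight attached to every corner. If every 2-cell with `q` corners has
corner weight sum at most `q − 2`, and the corners around each vertex have weight sum at
least 2, then we get a contradiction: no such weight assignment exists. -/
theorem combinatorial_gauss_bonnet (L : TwoComplex) (hS : L.IsSphere)
    (instV : Fintype L.V) (instE : Fintype L.E) (instF : Fintype L.F)
    (ω : L.Cor → ℝ)
    (hface : ∀ d : L.F,
      (∑ i : Fin (L.att d).length, ω ⟨d, i⟩) ≤ ((L.att d).length : ℝ) - 2)
    (hvert : ∀ v : L.V, (2 : ℝ) ≤ ∑ d ∈ @Finset.univ L.F instF,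
      ∑ i : Fin (L.att d).length, (if L.corV ⟨d, i⟩ = v then ω ⟨d, i⟩ else 0)) :
    False := by
  obtain ⟨_, _, _, _, _, hbij, heuler⟩ := hS
  haveI : Fintype L.Cor := show Fintype (Σ d : L.F, Fin (L.att d).length) from inferInstance
  -- the total corner weight sum
  set S : ℝ := ∑ d : L.F, ∑ i : Fin (L.att d).length, ω ⟨d, i⟩ with hS
  -- lower bound from vertices
  have h1 : (2 : ℝ) * Fintype.card L.V ≤ S := by
    have hsum : ∑ v : L.V, (2 : ℝ) ≤
        ∑ v : L.V, ∑ d : L.F, ∑ i : Fin (L.att d).length,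
          (if L.corV ⟨d, i⟩ = v then ω ⟨d, i⟩ else 0) :=
      Finset.sum_le_sum (fun v _ => hvert v)
    have hswap : ∑ v : L.V, ∑ d : L.F, ∑ i : Fin (L.att d).length,
        (if L.corV ⟨d, i⟩ = v then ω ⟨d, i⟩ else 0) = S := by
      rw [Finset.sum_comm]
      refine Finset.sum_congr rfl (fun d _ => ?_)
      rw [Finset.sum_comm]
      refine Finset.sum_congr rfl (fun i _ => ?_)
      simp
    have hleft : ∑ v : L.V, (2 : ℝ) = 2 * Fintype.card L.V := by
      simp [Finset.sum_const, mul_comm]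
    rw [hleft, hswap] at hsum
    exact hsum
  -- upper bound from faces
  have h2 : S ≤ (∑ d : L.F, ((L.att d).length : ℝ)) - 2 * Fintype.card L.F := by
    have := Finset.sum_le_sum (fun d (_ : d ∈ (Finset.univ : Finset L.F)) => hface d)
    calc S ≤ ∑ d : L.F, (((L.att d).length : ℝ) - 2) := this
      _ = (∑ d : L.F, ((L.att d).length : ℝ)) - 2 * Fintype.card L.F := by
          rw [Finset.sum_sub_distrib]
          simp [Finset.sum_const, mul_comm]
  -- the total number of corners equals the number of edges
  have hbijf : Function.Bijective L.corA := by
    constructor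
    · intro c c' h
      obtain ⟨c₀, _, huniq⟩ := hbij (L.corA c')
      rw [huniq c h, huniq c' rfl]
    · intro e
      obtain ⟨c, hc, _⟩ := hbij e
      exact ⟨c, hc⟩
  have hcardCor : Fintype.card L.Cor = Fintype.card L.E := Fintype.card_of_bijective hbijf
  have hsumlen : (∑ d : L.F, (L.att d).length) = Fintype.card L.E := by
    rw [← hcardCor]
    rw [show Fintype.card L.Cor = Fintype.card (Σ d : L.F, Fin (L.att d).length) from
      Fintype.card_congr (Equiv.refl _), Fintype.card_sigma]
    simp
  -- Euler characteristic
  have heuler' : 2 * (Fintype.card L.V + Fintype.card L.F) = Fintype.card L.E + 4 := by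
    simpa [Nat.card_eq_fintype_card] using heuler
  have hsumlenR : (∑ d : L.F, ((L.att d).length : ℝ)) = (Fintype.card L.E : ℝ) := by
    push_cast [← hsumlen]
    rfl
  rw [hsumlenR] at h2
  have := h1.trans h2
  have heulerR : 2 * ((Fintype.card L.V : ℝ) + Fintype.card L.F)
      = (Fintype.card L.E : ℝ) + 4 := by exact_mod_cast heuler'
  linarith
end

section
/- Every labeled oriented tree Γ admits a reorientation Γ′ (obtained by reversing the orientations of some edges) such that the positive link lk⁺(K(Γ′)) of the associated 2-complex is a tree; consequently K(Γ′) is DR directed away from any single one of its edges. -/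
set_option autoImplicit false
set_option linter.unusedVariables false

open scoped Classical

/-! ### Auxiliary machinery for Statement 17 -/

section Statement17Aux

open Relation

/-- The step relation of a graph. -/
def GStep (G : OGraph) (a b : G.V) : Prop := ∃ e : G.E, G.ini e = a ∧ G.ter e = b

lemma gstep_symm (G : OGraph) : Symmetric (GStep G) := by
  rintro a b ⟨e, hi, ht⟩
  refine ⟨G.bar e, ht, ?_⟩
  show G.ini (G.bar (G.bar e)) = a
  rw [G.bar_bar]; exact hi

lemma graph_conn_iff (G : OGraph) :
    G.Conn ↔ ∀ u v : G.V, Relation.ReflTransGen (GStep G) u v := Iff.rfl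

/-- A graph with endpoint function on an abstract index type. -/
def epGraph {V ι : Type} (ep : ι → V × V) : OGraph where
  V := V
  E := ι × Bool
  bar := fun e => (e.1, !e.2)
  bar_bar := by intro e; simp
  bar_ne := fun e h => Bool.not_ne_self e.2 (congrArg Prod.snd h)
  ini := fun e => if e.2 then (ep e.1).1 else (ep e.1).2

attribute [reducible] epGraph

@[simp] lemma epGraph_ini_true {V ι : Type} (ep : ι → V × V) (i : ι) :
    (epGraph ep).ini (i, true) = (ep i).1 := rfl

@[simp] lemma epGraph_ini_false {V ι : Type} (ep : ι → V × V) (i : ι) :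
    (epGraph ep).ini (i, false) = (ep i).2 := rfl

@[simp] lemma epGraph_bar {V ι : Type} (ep : ι → V × V) (i : ι) (b : Bool) :
    (epGraph ep).bar (i, b) = (i, !b) := rfl

lemma epGraph_ter {V ι : Type} (ep : ι → V × V) (i : ι) (b : Bool) :
    (epGraph ep).ter (i, b) = (epGraph ep).ini (i, !b) := rfl

/-- An isomorphism between graphs. -/
structure GIso (G G' : OGraph) where
  vE : G.V ≃ G'.V
  eE : G.E ≃ G'.E
  hbar : ∀ e, eE (G.bar e) = G'.bar (eE e)
  hini : ∀ e, vE (G.ini e) = G'.ini (eE e)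

namespace GIso

lemma hter {G G' : OGraph} (φ : GIso G G') :
    ∀ e, φ.vE (G.ter e) = G'.ter (φ.eE e) := by
  intro e
  show φ.vE (G.ini (G.bar e)) = G'.ini (G'.bar (φ.eE e))
  rw [← φ.hbar, φ.hini]

def symm {G G' : OGraph} (φ : GIso G G') : GIso G' G where
  vE := φ.vE.symm
  eE := φ.eE.symm
  hbar := by
    intro e
    apply φ.eE.injective
    rw [Equiv.apply_symm_apply, φ.hbar, Equiv.apply_symm_apply]
  hini := by
    intro e
    apply φ.vE.injective
    rw [Equiv.apply_symm_apply, φ.hini, Equiv.apply_symm_apply]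

lemma conn {G G' : OGraph} (φ : GIso G G') (hc : G.Conn) : G'.Conn := by
  intro u v
  have key : ∀ a b, Relation.ReflTransGen (GStep G) a b →
      Relation.ReflTransGen (GStep G') (φ.vE a) (φ.vE b) := by
    intro a b hab
    induction hab with
    | refl => exact .refl
    | tail _ hs ih =>
      rcases hs with ⟨e, hi, ht⟩
      exact ih.tail ⟨φ.eE e, by rw [← hi, φ.hini], by rw [← ht, φ.hter]⟩
  have h := key _ _ (hc (φ.vE.symm u) (φ.vE.symm v))
  simp only [Equiv.apply_symm_apply] at h; exact h

lemma reducedCycle_map {G G' : OGraph} (φ : GIso G G') {w : List G.E} (hw : G.ReducedCycle w) :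
    G'.ReducedCycle (w.map φ.eE) := by
  obtain ⟨⟨hpos, hcl⟩, hpos2, hred⟩ := hw
  have hlen : (w.map φ.eE).length = w.length := by simp
  have hpos' : 0 < (w.map φ.eE).length := by simpa using hpos
  have hget : ∀ i : Fin (w.map φ.eE).length,
      (w.map φ.eE).get i = φ.eE (w.get (Fin.cast hlen i)) := by
    intro i; simp
  have hidx : ∀ i : Fin (w.map φ.eE).length,
      Fin.cast hlen ⟨((i : ℕ) + 1) % (w.map φ.eE).length, Nat.mod_lt _ hpos'⟩ =
      ⟨((Fin.cast hlen i : ℕ) + 1) % w.length, Nat.mod_lt _ hpos⟩ := by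
    intro i
    apply Fin.ext
    simp [hlen]
  refine ⟨⟨hpos', ?_⟩, hpos', ?_⟩
  · intro i
    rw [hget, hget, hidx, ← φ.hter, ← φ.hini]
    exact congrArg _ (hcl (Fin.cast hlen i))
  · intro i
    rw [hget, hget, hidx, ← φ.hbar]
    intro hEq
    exact hred (Fin.cast hlen i) (φ.eE.injective hEq)

lemma isForest {G G' : OGraph} (φ : GIso G G') (hf : G.IsForest) : G'.IsForest := by
  rintro ⟨w', hw'⟩
  exact hf ⟨w'.map φ.symm.eE, φ.symm.reducedCycle_map hw'⟩

lemma isTree {G G' : OGraph} (φ : GIso G G') (ht : G.IsTree) : G'.IsTree :=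
  ⟨φ.conn ht.1, φ.isForest ht.2⟩

end GIso

/-- Iso between `epGraph`s that reindexes edges and possibly swaps endpoint pairs. -/
def epIsoFlip {V ι ι' : Type} (ep : ι → V × V) (ep' : ι' → V × V) (e : ι ≃ ι') (s : ι → Bool)
    (hep : ∀ i, ep' (e i) = if s i then (ep i).swap else ep i) :
    GIso (epGraph ep) (epGraph ep') where
  vE := Equiv.refl V
  eE := { toFun := fun d => (e d.1, xor d.2 (s d.1))
          invFun := fun d => (e.symm d.1, xor d.2 (s (e.symm d.1)))
          left_inv := by
            rintro ⟨i, b⟩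
            simp [Bool.xor_assoc]
          right_inv := by
            rintro ⟨i, b⟩
            simp [Bool.xor_assoc] }
  hbar := by
    rintro ⟨i, b⟩
    show (e i, xor (!b) (s i)) = (e i, !(xor b (s i)))
    cases b <;> cases hsi : s i <;> simp
  hini := by
    rintro ⟨i, b⟩
    show (epGraph ep).ini (i, b) = (epGraph ep').ini (e i, xor b (s i))
    have h := hep i
    cases b <;> cases hsi : s i <;>
      simp [epGraph, h, hsi, Prod.swap] <;> rfl

/-- Iso between `epGraph`s that merely reindexes edges. -/
def epIso {V ι ι' : Type} (ep : ι → V × V) (ep' : ι' → V × V) (e : ι ≃ ι')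
    (hep : ∀ i, ep' (e i) = ep i) : GIso (epGraph ep) (epGraph ep') :=
  epIsoFlip ep ep' e (fun _ => false) (by intro i; simpa using hep i)

end Statement17Aux
section Statement17Aux2

open Relation

/-- A rooted-forest structure on a graph: a parent assignment with decreasing depth
covering all darts, and a unique root. It forces the graph to be a tree. -/
structure RFS (G : OGraph) where
  par : G.V → Option G.E
  dep : G.V → ℕ
  par_ini : ∀ v e, par v = some e → G.ini e = v
  par_dec : ∀ v e, par v = some e → dep (G.ter e) < dep v
  covers : ∀ d : G.E, par (G.ini d) = some d ∨ par (G.ter d) = some (G.bar d)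
  root_uniq : ∀ u v, par u = none → par v = none → u = v

namespace RFS

lemma reach {G : OGraph} (R : RFS G) :
    ∀ (n : ℕ) (v : G.V), R.dep v ≤ n →
      ∃ r, R.par r = none ∧ ReflTransGen (GStep G) v r := by
  intro n
  induction n with
  | zero =>
    intro v hv
    cases hpar : R.par v with
    | none => exact ⟨v, hpar, .refl⟩
    | some e => exact absurd (R.par_dec v e hpar) (by omega)
  | succ n ih =>
    intro v hv
    cases hpar : R.par v with
    | none => exact ⟨v, hpar, .refl⟩
    | some e =>
      obtain ⟨r, h1, h2⟩ := ih (G.ter e) (by have := R.par_dec v e hpar; omega)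
      exact ⟨r, h1, .head ⟨e, R.par_ini v e hpar, rfl⟩ h2⟩

lemma conn {G : OGraph} (R : RFS G) : G.Conn := by
  intro u v
  obtain ⟨ru, hru, hu⟩ := R.reach (R.dep u) u le_rfl
  obtain ⟨rv, hrv, hv⟩ := R.reach (R.dep v) v le_rfl
  have h : ru = rv := R.root_uniq _ _ hru hrv
  subst h
  haveI : Std.Symm (GStep G) := ⟨gstep_symm G⟩
  exact hu.trans (Std.Symm.symm _ _ hv)

lemma isForest {G : OGraph} (R : RFS G) : G.IsForest := by
  rintro ⟨w, ⟨hpos, hcl⟩, hpos2, hred⟩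
  have hne : (Finset.univ : Finset (Fin w.length)).Nonempty := ⟨⟨0, hpos⟩, Finset.mem_univ _⟩
  obtain ⟨i₀, -, hmax⟩ :=
    Finset.exists_max_image Finset.univ (fun i : Fin w.length => R.dep (G.ini (w.get i))) hne
  have hmax' : ∀ i : Fin w.length, R.dep (G.ini (w.get i)) ≤ R.dep (G.ini (w.get i₀)) :=
    fun i => hmax i (Finset.mem_univ _)
  -- par of the deepest vertex is the outgoing dart
  have h1 : R.par (G.ini (w.get i₀)) = some (w.get i₀) := by
    rcases R.covers (w.get i₀) with h | h
    · exact h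
    · exfalso
      have hdec := R.par_dec _ _ h
      have hterbar : G.ter (G.bar (w.get i₀)) = G.ini (w.get i₀) := by
        show G.ini (G.bar (G.bar (w.get i₀))) = _
        rw [G.bar_bar]
      rw [hterbar, hcl i₀] at hdec
      exact absurd hdec (not_lt.mpr (hmax' _))
  -- the predecessor index
  have hj : ((i₀ : ℕ) + (w.length - 1)) % w.length < w.length := Nat.mod_lt _ hpos
  set j : Fin w.length := ⟨((i₀ : ℕ) + (w.length - 1)) % w.length, hj⟩ with hjdef
  have hj1 : ((j : ℕ) + 1) % w.length = (i₀ : ℕ) := by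
    show (((i₀ : ℕ) + (w.length - 1)) % w.length + 1) % w.length = _
    rw [Nat.mod_add_mod]
    have h2 : (i₀ : ℕ) + (w.length - 1) + 1 = (i₀ : ℕ) + w.length := by omega
    rw [h2, Nat.add_mod_right]
    exact Nat.mod_eq_of_lt i₀.2
  have hjfin : (⟨((j : ℕ) + 1) % w.length, Nat.mod_lt _ hpos⟩ : Fin w.length) = i₀ :=
    Fin.ext hj1
  have hclj : G.ter (w.get j) = G.ini (w.get i₀) := by
    have := hcl j
    rwa [hjfin] at this
  -- par of the deepest vertex is also the reverse of the incoming dart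
  have h2 : R.par (G.ini (w.get i₀)) = some (G.bar (w.get j)) := by
    rcases R.covers (G.bar (w.get j)) with h | h
    · have hini : G.ini (G.bar (w.get j)) = G.ini (w.get i₀) := hclj
      rwa [hini] at h
    · exfalso
      have hdec := R.par_dec _ _ h
      have e1 : G.ter (G.bar (G.bar (w.get j))) = G.ter (w.get j) := by rw [G.bar_bar]
      have e2 : G.ter (G.bar (w.get j)) = G.ini (w.get j) := by
        show G.ini (G.bar (G.bar (w.get j))) = _
        rw [G.bar_bar]
      rw [e1, e2, hclj] at hdec
      exact absurd hdec (not_lt.mpr (hmax' _))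
  have h3 : w.get i₀ = G.bar (w.get j) := by
    have := h1.symm.trans h2
    exact Option.some.inj this
  apply hred j
  rw [show (⟨((j : ℕ) + 1) % w.length, Nat.mod_lt _ hpos2⟩ : Fin w.length) = i₀ from Fin.ext hj1]
  exact h3

lemma isTree {G : OGraph} (R : RFS G) : G.IsTree := ⟨R.conn, R.isForest⟩

end RFS

/-- In a finite graph in which every dart of `S` has a continuation different from its
inverse, there is a reduced cycle. -/
lemma exists_reducedCycle (G : OGraph) [Finite G.E] (S : Set G.E)
    (hdeg : ∀ e ∈ S, ∃ e', e' ∈ S ∧ G.ini e' = G.ter e ∧ e' ≠ G.bar e)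
    (e₀ : G.E) (he₀ : e₀ ∈ S) : ∃ w, G.ReducedCycle w := by
  classical
  have hstep : ∀ e : {e // e ∈ S}, ∃ e' : {e // e ∈ S},
      G.ini e'.1 = G.ter e.1 ∧ e'.1 ≠ G.bar e.1 := by
    rintro ⟨e, he⟩
    obtain ⟨e', h1, h2, h3⟩ := hdeg e he
    exact ⟨⟨e', h1⟩, h2, h3⟩
  choose nxt hnxt1 hnxt2 using hstep
  set seq : ℕ → {e // e ∈ S} := fun m => nxt^[m] ⟨e₀, he₀⟩ with hseqdef
  have hseq : ∀ m, seq (m + 1) = nxt (seq m) := by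
    intro m
    show nxt^[m + 1] _ = _
    rw [Function.iterate_succ_apply']
  obtain ⟨i, k, hlt, heq⟩ : ∃ i k, i < k ∧ seq i = seq k := by
    obtain ⟨i, k, hik, h⟩ := Finite.exists_ne_map_eq_of_infinite seq
    rcases lt_or_gt_of_ne hik with hh | hh
    · exact ⟨i, k, hh, h⟩
    · exact ⟨k, i, hh, h.symm⟩
  set m := k - i with hm
  have hmpos : 0 < m := by omega
  set w : List G.E := List.ofFn (fun t : Fin m => (seq (i + (t : ℕ))).1) with hw
  have hlen : w.length = m := by simp [hw]
  have hget : ∀ t : Fin w.length, w.get t = (seq (i + (t : ℕ))).1 := by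
    intro t
    simp [hw, List.get_ofFn]
  have hkey : ∀ t : ℕ, t < m →
      seq (i + (t + 1) % m) = nxt (seq (i + t)) := by
    intro t ht
    rcases Nat.lt_or_ge (t + 1) m with h | h
    · rw [Nat.mod_eq_of_lt h, show i + (t + 1) = (i + t) + 1 by omega, hseq]
    · have ht1 : t + 1 = m := by omega
      rw [ht1, Nat.mod_self, Nat.add_zero]
      have h2 : i + t + 1 = k := by omega
      rw [heq, ← h2, hseq]
  have hpos : 0 < w.length := by omega
  refine ⟨w, ⟨⟨hpos, ?_⟩, hpos, ?_⟩⟩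
  · intro t
    rw [hget, hget]
    have h5 := hkey (t : ℕ) (by omega)
    have hval : ∀ s : ℕ, s % w.length = s % m := fun s => by rw [hlen]
    simp only [Fin.val_mk]
    rw [hval, h5]
    exact (hnxt1 _).symm
  · intro t
    rw [hget, hget]
    have h5 := hkey (t : ℕ) (by omega)
    have hval : ∀ s : ℕ, s % w.length = s % m := fun s => by rw [hlen]
    simp only [Fin.val_mk]
    rw [hval, h5]
    exact hnxt2 _

/-- In a finite forest, any nonempty bar-closed set of darts contains a dart `e` such that
the only dart of `S` emanating from `ter e` is `bar e` (a "leaf" of `S`). -/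
lemma exists_leaf (G : OGraph) [Finite G.E] (hforest : G.IsForest) (S : Set G.E)
    (e₀ : G.E) (he₀ : e₀ ∈ S) :
    ∃ e ∈ S, ∀ e' ∈ S, G.ini e' = G.ter e → e' = G.bar e := by
  by_contra hcon
  push_neg at hcon
  exact hforest (exists_reducedCycle G S (fun e he => hcon e he) e₀ he₀)

end Statement17Aux2
section Statement17Core

open Relation

/-- Mapping reduced cycles through an injective graph morphism. -/
lemma reducedCycle_map' {G G' : OGraph} (fV : G.V → G'.V) (fE : G.E → G'.E)
    (hinj : Function.Injective fE)
    (hbar : ∀ e, fE (G.bar e) = G'.bar (fE e))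
    (hini : ∀ e, fV (G.ini e) = G'.ini (fE e))
    {w : List G.E} (hw : G.ReducedCycle w) : G'.ReducedCycle (w.map fE) := by
  have hter : ∀ e, fV (G.ter e) = G'.ter (fE e) := by
    intro e
    show fV (G.ini (G.bar e)) = G'.ini (G'.bar (fE e))
    rw [← hbar, hini]
  obtain ⟨⟨hpos, hcl⟩, hpos2, hred⟩ := hw
  have hlen : (w.map fE).length = w.length := by simp
  have hpos' : 0 < (w.map fE).length := by simpa using hpos
  have hget : ∀ i : Fin (w.map fE).length,
      (w.map fE).get i = fE (w.get (Fin.cast hlen i)) := by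
    intro i; simp
  have hidx : ∀ i : Fin (w.map fE).length,
      Fin.cast hlen ⟨((i : ℕ) + 1) % (w.map fE).length, Nat.mod_lt _ hpos'⟩ =
      ⟨((Fin.cast hlen i : ℕ) + 1) % w.length, Nat.mod_lt _ hpos⟩ := by
    intro i
    apply Fin.ext
    simp [hlen]
  refine ⟨⟨hpos', ?_⟩, hpos', ?_⟩
  · intro i
    rw [hget, hget, hidx, ← hter, ← hini]
    exact congrArg _ (hcl (Fin.cast hlen i))
  · intro i
    rw [hget, hget, hidx, ← hbar]
    intro hEq
    exact hred (Fin.cast hlen i) (hinj hEq)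

lemma core_orient : ∀ (k : ℕ) (V ι : Type), Finite ι → ∀ (ep : ι → V × V) (z : ι → V),
    Nat.card ι = k → (epGraph ep).IsTree →
    ∃ w : ι → V, (∀ i, w i = (ep i).1 ∨ w i = (ep i).2) ∧
      Nonempty (RFS (epGraph (fun i => (z i, w i)))) := by
  intro k
  induction k with
  | zero =>
    intro V ι hfin ep z hcard htree
    haveI := hfin
    have hempty : IsEmpty ι := by
      rcases Nat.card_eq_zero.mp hcard with h | h
      · exact h
      · exact absurd hfin h.not_finite
    refine ⟨fun i => (ep i).1, fun i => Or.inl rfl,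
      ⟨⟨fun _ => none, fun _ => 0, ?_, ?_, ?_, ?_⟩⟩⟩
    · intro v e h; simp at h
    · intro v e h; simp at h
    · intro d; exact hempty.elim d.1
    · intro u v _ _
      have h := htree.1 u v
      induction h with
      | refl => rfl
      | tail _ hs ih => rcases hs with ⟨e, _, _⟩; exact hempty.elim e.1
  | succ k ih =>
    intro V ι hfin ep z hcard htree
    haveI := hfin
    classical
    have hne : Nonempty ι := (Nat.card_ne_zero.mp (by omega)).1
    set G := epGraph ep with hG
    haveI : Finite G.E := inferInstanceAs (Finite (ι × Bool))
    obtain ⟨e, -, hleaf⟩ :=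
      exists_leaf G htree.2 Set.univ (Classical.arbitrary ι, true) trivial
    set d₀ := G.bar e with hd₀
    have hUniq : ∀ d', G.ini d' = G.ini d₀ → d' = d₀ := by
      intro d' hd'
      exact hleaf d' trivial hd'
    set ℓ : V := G.ini d₀ with hℓ
    set p : V := G.ter d₀ with hp
    have hℓp : ℓ ≠ p := by
      intro hcontra
      have h2 : G.ini (G.bar d₀) = G.ini d₀ := hcontra.symm
      exact G.bar_ne d₀ (hUniq _ h2)
    set i₀ := d₀.1 with hi₀
    have hother : ∀ i, i ≠ i₀ → (ep i).1 ≠ ℓ ∧ (ep i).2 ≠ ℓ := by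
      intro i hi
      constructor
      · intro hcon
        have h3 : G.ini (i, true) = G.ini d₀ := hcon
        exact hi (congrArg Prod.fst (hUniq _ h3))
      · intro hcon
        have h3 : G.ini (i, false) = G.ini d₀ := hcon
        exact hi (congrArg Prod.fst (hUniq _ h3))
    have hd₀pair : d₀ = (i₀, d₀.2) := rfl
    have hlp : (ℓ = (ep i₀).1 ∧ p = (ep i₀).2) ∨ (ℓ = (ep i₀).2 ∧ p = (ep i₀).1) := by
      cases hb : d₀.2 with
      | false =>
        right
        constructor
        · rw [hℓ, hd₀pair, hb]; rfl
        · rw [hp, hd₀pair, hb]; rfl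
      | true =>
        left
        constructor
        · rw [hℓ, hd₀pair, hb]; rfl
        · rw [hp, hd₀pair, hb]; rfl
    set a := if z i₀ = ℓ then p else z i₀ with ha_def
    have ha : a ≠ ℓ := by
      rw [ha_def]
      split
      · exact Ne.symm hℓp
      · next h => exact h
    haveI : Finite {i : ι // i ≠ i₀} := Subtype.finite
    have hcard₂ : Nat.card {i : ι // i ≠ i₀} = k := by
      haveI := Fintype.ofFinite ι
      have h1 : Nat.card ι = Fintype.card ι := Nat.card_eq_fintype_card
      have h2 : Nat.card {i : ι // i ≠ i₀} = Fintype.card {i : ι // ¬(i = i₀)} :=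
        Nat.card_eq_fintype_card
      rw [Fintype.card_subtype_compl, Fintype.card_subtype_eq] at h2
      omega
    set ep₂ : {i : ι // i ≠ i₀} → {v : V // v ≠ ℓ} × {v : V // v ≠ ℓ} := fun i =>
      (⟨(ep i.1).1, (hother i.1 i.2).1⟩, ⟨(ep i.1).2, (hother i.1 i.2).2⟩) with hep₂
    set z₂ : {i : ι // i ≠ i₀} → {v : V // v ≠ ℓ} :=
      fun i => if h : z i.1 = ℓ then ⟨a, ha⟩ else ⟨z i.1, h⟩ with hz₂
    set G₂ := epGraph ep₂ with hG₂
    -- replacement map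
    set repl : V → {v : V // v ≠ ℓ} :=
      fun v => if h : v = ℓ then ⟨p, Ne.symm hℓp⟩ else ⟨v, h⟩ with hrepl
    have hrepl_ne : ∀ (v : V) (h : v ≠ ℓ), repl v = ⟨v, h⟩ := by
      intro v h; simp [hrepl, h]
    have hrepl_ℓ : repl ℓ = ⟨p, Ne.symm hℓp⟩ := by simp [hrepl]
    -- connectivity of the shrunken graph
    have hconn₂ : G₂.Conn := by
      have key : ∀ u v' : V, ReflTransGen (GStep G) u v' →
          ReflTransGen (GStep G₂) (repl u) (repl v') := by
        intro u v' h
        induction h with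
        | refl => exact .refl
        | @tail b c hab hs ihstep =>
          refine ihstep.trans ?_
          rcases hs with ⟨ed, hib, htc⟩
          by_cases hb : b = ℓ
          · have hed : ed = d₀ := hUniq ed (by rw [hib, hb])
            have hc : c = p := by rw [← htc, hed]
            rw [hb, hc, hrepl_ℓ, hrepl_ne p (Ne.symm hℓp)]
          · by_cases hc : c = ℓ
            · have hed : G.bar ed = d₀ := hUniq _ (by show G.ter ed = ℓ; rw [htc, hc])
              have hb2 : b = p := by
                rw [← hib, ← G.bar_bar ed, hed]; rfl
              rw [hb2, hc, hrepl_ℓ, hrepl_ne p (Ne.symm hℓp)]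
            · obtain ⟨ie, be⟩ := ed
              have hi : ie ≠ i₀ := by
                intro hcon
                by_cases hE : be = d₀.2
                · apply hb
                  rw [← hib]
                  show G.ini (ie, be) = ℓ
                  rw [hcon, hE, ← hd₀pair]
                · have hE2 : be = !d₀.2 := by
                    cases hbd : d₀.2 <;> cases hbE : be
                    · exact absurd (by rw [hbE, hbd]) hE
                    · rfl
                    · rfl
                    · exact absurd (by rw [hbE, hbd]) hE
                  apply hc
                  rw [← htc]
                  show G.ter (ie, be) = ℓ
                  rw [hcon, hE2]
                  show G.ini (G.bar (i₀, !d₀.2)) = ℓ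
                  have hbb : G.bar (i₀, !d₀.2) = (i₀, d₀.2) := by
                    show (i₀, !(!d₀.2)) = (i₀, d₀.2)
                    rw [Bool.not_not]
                  rw [hbb, ← hd₀pair]
              refine ReflTransGen.single ⟨(⟨ie, hi⟩, be), ?_, ?_⟩
              · rw [hrepl_ne b hb]
                apply Subtype.ext
                show (G₂.ini (⟨ie, hi⟩, be)).1 = b
                rw [← hib]
                cases be <;> rfl
              · rw [hrepl_ne c hc]
                apply Subtype.ext
                show (G₂.ter (⟨ie, hi⟩, be)).1 = c
                rw [← htc]
                cases be <;> rfl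
      intro u₂ v₂
      have h := key u₂.1 v₂.1 (htree.1 u₂.1 v₂.1)
      rw [hrepl_ne u₂.1 u₂.2, hrepl_ne v₂.1 v₂.2] at h; exact h
    have hforest₂ : G₂.IsForest := by
      rintro ⟨w₂, hw₂⟩
      refine htree.2 ⟨w₂.map (fun d : G₂.E => (d.1.1, d.2)), ?_⟩
      refine reducedCycle_map' (G := G₂) (G' := G) (fun v : G₂.V => v.1)
        (fun d : G₂.E => (d.1.1, d.2)) ?_ ?_ ?_ hw₂
      · rintro ⟨⟨j1, h1⟩, b1⟩ ⟨⟨j2, h2⟩, b2⟩ hEq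
        injection hEq with hA hB
        subst hA
        subst hB
        rfl
      · rintro ⟨⟨j1, h1⟩, b1⟩; rfl
      · rintro ⟨⟨j1, h1⟩, b1⟩; cases b1 <;> rfl
    obtain ⟨w₂, hw₂, ⟨R₂⟩⟩ :=
      ih {v : V // v ≠ ℓ} {i : ι // i ≠ i₀} inferInstance ep₂ z₂ hcard₂ ⟨hconn₂, hforest₂⟩
    have bool_flip : ∀ x y : Bool, ¬ x = y → x = !y := by decide
    set w : ι → V := fun i => if h : i = i₀ then (if z i₀ = ℓ then p else ℓ) else (w₂ ⟨i, h⟩).1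
      with hwdef
    have hwi₀ : w i₀ = if z i₀ = ℓ then p else ℓ := by rw [hwdef]; exact dif_pos rfl
    have hwi : ∀ (i) (h : i ≠ i₀), w i = (w₂ ⟨i, h⟩).1 := by
      intro i h; rw [hwdef]; exact dif_neg h
    have hwdisj : ∀ i, w i = (ep i).1 ∨ w i = (ep i).2 := by
      intro i
      by_cases h : i = i₀
      · subst h
        rw [hwi₀]
        rcases hlp with ⟨h1, h2⟩ | ⟨h1, h2⟩
        · split
          · exact Or.inr h2
          · exact Or.inl h1
        · split
          · exact Or.inl h2
          · exact Or.inr h1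
      · rw [hwi i h]
        rcases hw₂ ⟨i, h⟩ with hh | hh
        · left; rw [hh]
        · right; rw [hh]
    set bℓ : Bool := if z i₀ = ℓ then true else false with hbℓ
    have hbℓ_pos : z i₀ = ℓ → bℓ = true := fun h => by rw [hbℓ]; exact if_pos h
    have hbℓ_neg : ¬ z i₀ = ℓ → bℓ = false := fun h => by rw [hbℓ]; exact if_neg h
    set H := epGraph (fun i => (z i, w i)) with hH
    set H₂ := epGraph (fun i : {i : ι // i ≠ i₀} => (z₂ i, w₂ i)) with hH₂
    have hz₂_pos : ∀ (i : ι) (hi : i ≠ i₀), z i = ℓ → z₂ ⟨i, hi⟩ = ⟨a, ha⟩ := by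
      intro i hi h; simp only [hz₂]; exact dif_pos h
    have hz₂_neg : ∀ (i : ι) (hi : i ≠ i₀) (h : ¬ z i = ℓ), z₂ ⟨i, hi⟩ = ⟨z i, h⟩ := by
      intro i hi h; simp only [hz₂]; exact dif_neg h
    have hini_bℓ : H.ini (i₀, bℓ) = ℓ := by
      by_cases h : z i₀ = ℓ
      · rw [hbℓ_pos h]; show z i₀ = ℓ; exact h
      · rw [hbℓ_neg h]; show w i₀ = ℓ; rw [hwi₀, if_neg h]
    have hini_nbℓ : H.ini (i₀, !bℓ) = a := by
      by_cases h : z i₀ = ℓ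
      · rw [hbℓ_pos h]
        show w i₀ = a
        rw [hwi₀, if_pos h, ha_def, if_pos h]
      · rw [hbℓ_neg h]
        show z i₀ = a
        rw [ha_def, if_neg h]
    have hter_bℓ : H.ter (i₀, bℓ) = a := hini_nbℓ
    have hter_nbℓ : H.ter (i₀, !bℓ) = ℓ := by
      show H.ini (i₀, !(!bℓ)) = ℓ
      rw [Bool.not_not]
      exact hini_bℓ
    set lift : H₂.E → H.E := fun d => (d.1.1, d.2) with hliftdef
    have hlift_ini : ∀ (i : ι) (hi : i ≠ i₀) (bb : Bool),
        H.ini (i, bb) = (H₂.ini (⟨i, hi⟩, bb)).1 ∨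
          (bb = true ∧ z i = ℓ ∧ H₂.ini (⟨i, hi⟩, bb) = ⟨a, ha⟩ ∧ H.ini (i, bb) = ℓ) := by
      intro i hi bb
      cases bb with
      | false =>
        left
        show w i = (w₂ ⟨i, hi⟩).1
        exact hwi i hi
      | true =>
        by_cases hz : z i = ℓ
        · right
          exact ⟨rfl, hz, hz₂_pos i hi hz, hz⟩
        · left
          show z i = (z₂ ⟨i, hi⟩).1
          rw [hz₂_neg i hi hz]
    clear hleaf hUniq hd₀ hd₀pair
    by_cases hM : ∃ (i : ι) (hi : i ≠ i₀), R₂.par ⟨a, ha⟩ = some (⟨i, hi⟩, true) ∧ z i = ℓ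
    · -- the parent of `a` in the shrunken tree hangs on `ℓ` after the split
      obtain ⟨iS, hiS, hparA, hzS⟩ := hM
      have hdepa : 0 < R₂.dep ⟨a, ha⟩ := by
        have := R₂.par_dec _ _ hparA
        omega
      refine ⟨w, hwdisj, ⟨⟨
        fun v => if hv : v = ℓ then some (iS, true)
          else if v = a then some (i₀, !bℓ) else Option.map lift (R₂.par ⟨v, hv⟩),
        fun v => if hv : v = ℓ then 2 * R₂.dep ⟨a, ha⟩ - 1 else 2 * R₂.dep ⟨v, hv⟩,
        ?_, ?_, ?_, ?_⟩⟩⟩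
      · -- par_ini
        intro v eE hpe
        by_cases hv : v = ℓ
        · rw [dif_pos hv] at hpe
          injection hpe with h
          subst h
          rw [hv]
          show z iS = ℓ
          exact hzS
        · rw [dif_neg hv] at hpe
          by_cases hva : v = a
          · rw [if_pos hva] at hpe
            injection hpe with h
            subst h
            rw [hva]
            exact hini_nbℓ
          · rw [if_neg hva] at hpe
            obtain ⟨⟨⟨i, hi⟩, bb⟩, hp2, hEq⟩ := Option.map_eq_some_iff.mp hpe
            have hEq2 : eE = (i, bb) := hEq.symm
            subst hEq2
            have hini₂ := R₂.par_ini _ _ hp2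
            rcases hlift_ini i hi bb with h | ⟨hb, hz, h2, h3⟩
            · rw [h, hini₂]
            · exfalso
              exact hva (congrArg Subtype.val (hini₂.symm.trans h2))
      · -- par_dec
        intro v eE hpe
        by_cases hv : v = ℓ
        · rw [dif_pos hv] at hpe
          injection hpe with h
          subst h
          have hterS : H.ter (iS, true) = (w₂ ⟨iS, hiS⟩).1 := hwi iS hiS
          rw [hterS]
          have hne2 : (w₂ ⟨iS, hiS⟩).1 ≠ ℓ := (w₂ ⟨iS, hiS⟩).2
          rw [dif_neg hne2, dif_pos hv]
          have hdec := R₂.par_dec _ _ hparA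
          have hterS₂ : H₂.ter (⟨iS, hiS⟩, true) = w₂ ⟨iS, hiS⟩ := rfl
          rw [hterS₂] at hdec
          have hsub : (⟨(w₂ ⟨iS, hiS⟩).1, hne2⟩ : {v : V // v ≠ ℓ}) = w₂ ⟨iS, hiS⟩ :=
            Subtype.ext rfl
          rw [hsub]
          omega
        · rw [dif_neg hv] at hpe
          by_cases hva : v = a
          · rw [if_pos hva] at hpe
            injection hpe with h
            subst h
            rw [hter_nbℓ, dif_pos rfl, dif_neg hv]
            have hsub : (⟨v, hv⟩ : {v : V // v ≠ ℓ}) = ⟨a, ha⟩ := Subtype.ext hva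
            rw [hsub]
            omega
          · rw [if_neg hva] at hpe
            obtain ⟨⟨⟨i, hi⟩, bb⟩, hp2, hEq⟩ := Option.map_eq_some_iff.mp hpe
            have hEq2 : eE = (i, bb) := hEq.symm
            subst hEq2
            have hdec := R₂.par_dec _ _ hp2
            rcases hlift_ini i hi (!bb) with h | ⟨hb, hz, h2, h3⟩
            · have hterH : H.ter (i, bb) = (H₂.ter (⟨i, hi⟩, bb)).1 := h
              rw [hterH]
              have hne2 : (H₂.ter (⟨i, hi⟩, bb)).1 ≠ ℓ := (H₂.ter (⟨i, hi⟩, bb)).2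
              rw [dif_neg hne2, dif_neg hv]
              have hsub : (⟨(H₂.ter (⟨i, hi⟩, bb)).1, hne2⟩ : {v : V // v ≠ ℓ}) =
                  H₂.ter (⟨i, hi⟩, bb) := Subtype.ext rfl
              rw [hsub]
              omega
            · have hterH : H.ter (i, bb) = ℓ := h3
              rw [hterH, dif_pos rfl, dif_neg hv]
              have h4 : H₂.ter (⟨i, hi⟩, bb) = ⟨a, ha⟩ := h2
              rw [h4] at hdec
              omega
      · -- covers
        rintro ⟨i, bb⟩
        by_cases hi : i = i₀
        · subst hi
          by_cases hbb : bb = !bℓ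
          · subst hbb
            left
            rw [hini_nbℓ, dif_neg ha, if_pos rfl]
          · have hbb2 : bb = bℓ := by
              have := bool_flip bb (!bℓ) hbb
              rwa [Bool.not_not] at this
            subst hbb2
            right
            rw [hter_bℓ, dif_neg ha, if_pos rfl]
        · by_cases hiS2 : i = iS
          · subst hiS2
            cases bb with
            | true =>
              left
              have : H.ini (i, true) = ℓ := hzS
              rw [this, dif_pos rfl]
            | false =>
              right
              have : H.ter (i, false) = ℓ := hzS
              rw [this, dif_pos rfl]
              rfl
          · rcases R₂.covers (⟨i, hi⟩, bb) with h | h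
            · left
              rcases hlift_ini i hi bb with hrel | ⟨hb, hz, h2, h3⟩
              · rw [hrel]
                have hu2 : (H₂.ini (⟨i, hi⟩, bb)).1 ≠ ℓ := (H₂.ini (⟨i, hi⟩, bb)).2
                rw [dif_neg hu2]
                by_cases hua : (H₂.ini (⟨i, hi⟩, bb)).1 = a
                · exfalso
                  have h6 : H₂.ini (⟨i, hi⟩, bb) = ⟨a, ha⟩ := Subtype.ext hua
                  rw [h6] at h
                  have h7 := hparA.symm.trans h
                  injection h7 with h5
                  exact hiS2 (congrArg (fun q : H₂.E => q.1.1) h5).symm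
                · rw [if_neg hua]
                  have hsub : (⟨(H₂.ini (⟨i, hi⟩, bb)).1, hu2⟩ : {v : V // v ≠ ℓ}) =
                      H₂.ini (⟨i, hi⟩, bb) := Subtype.ext rfl
                  rw [hsub, h]
                  rfl
              · exfalso
                rw [h2] at h
                have h7 := hparA.symm.trans h
                injection h7 with h5
                exact hiS2 (congrArg (fun q : H₂.E => q.1.1) h5).symm
            · right
              rcases hlift_ini i hi (!bb) with hrel | ⟨hb, hz, h2, h3⟩
              · have hterH : H.ter (i, bb) = (H₂.ter (⟨i, hi⟩, bb)).1 := hrel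
                rw [hterH]
                have hne2 : (H₂.ter (⟨i, hi⟩, bb)).1 ≠ ℓ := (H₂.ter (⟨i, hi⟩, bb)).2
                rw [dif_neg hne2]
                by_cases hua : (H₂.ter (⟨i, hi⟩, bb)).1 = a
                · exfalso
                  have h6 : H₂.ter (⟨i, hi⟩, bb) = ⟨a, ha⟩ := Subtype.ext hua
                  rw [h6] at h
                  have h7 := hparA.symm.trans h
                  injection h7 with h5
                  exact hiS2 (congrArg (fun q : H₂.E => q.1.1) h5).symm
                · rw [if_neg hua]
                  have hsub : (⟨(H₂.ter (⟨i, hi⟩, bb)).1, hne2⟩ : {v : V // v ≠ ℓ}) =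
                      H₂.ter (⟨i, hi⟩, bb) := Subtype.ext rfl
                  rw [hsub, h]
                  rfl
              · exfalso
                have h6 : H₂.ter (⟨i, hi⟩, bb) = ⟨a, ha⟩ := h2
                rw [h6] at h
                have h7 := hparA.symm.trans h
                injection h7 with h5
                exact hiS2 (congrArg (fun q : H₂.E => q.1.1) h5).symm
      · -- root_uniq
        intro u v hu hv
        by_cases hu1 : u = ℓ
        · rw [dif_pos hu1] at hu; exact absurd hu (by simp)
        rw [dif_neg hu1] at hu
        by_cases hu2 : u = a
        · rw [if_pos hu2] at hu; exact absurd hu (by simp)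
        rw [if_neg hu2] at hu
        by_cases hv1 : v = ℓ
        · rw [dif_pos hv1] at hv; exact absurd hv (by simp)
        rw [dif_neg hv1] at hv
        by_cases hv2 : v = a
        · rw [if_pos hv2] at hv; exact absurd hv (by simp)
        rw [if_neg hv2] at hv
        exact congrArg Subtype.val
          (R₂.root_uniq _ _ (Option.map_eq_none_iff.mp hu) (Option.map_eq_none_iff.mp hv))
    · -- no reattachment needed: `ℓ` becomes a leaf hanging on `a`
      refine ⟨w, hwdisj, ⟨⟨
        fun v => if hv : v = ℓ then some (i₀, bℓ) else Option.map lift (R₂.par ⟨v, hv⟩),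
        fun v => if hv : v = ℓ then 2 * R₂.dep ⟨a, ha⟩ + 1 else 2 * R₂.dep ⟨v, hv⟩,
        ?_, ?_, ?_, ?_⟩⟩⟩
      · -- par_ini
        intro v eE hpe
        by_cases hv : v = ℓ
        · rw [dif_pos hv] at hpe
          injection hpe with h
          subst h
          rw [hv]
          exact hini_bℓ
        · rw [dif_neg hv] at hpe
          obtain ⟨⟨⟨i, hi⟩, bb⟩, hp2, hEq⟩ := Option.map_eq_some_iff.mp hpe
          have hEq2 : eE = (i, bb) := hEq.symm
          subst hEq2
          have hini₂ := R₂.par_ini _ _ hp2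
          rcases hlift_ini i hi bb with h | ⟨hb, hz, h2, h3⟩
          · rw [h, hini₂]
          · exfalso
            subst hb
            have h7 : (⟨v, hv⟩ : {v : V // v ≠ ℓ}) = ⟨a, ha⟩ := hini₂.symm.trans h2
            rw [h7] at hp2
            exact hM ⟨i, hi, hp2, hz⟩
      · -- par_dec
        intro v eE hpe
        by_cases hv : v = ℓ
        · rw [dif_pos hv] at hpe
          injection hpe with h
          subst h
          rw [hter_bℓ, dif_neg ha, dif_pos hv]
          omega
        · rw [dif_neg hv] at hpe
          obtain ⟨⟨⟨i, hi⟩, bb⟩, hp2, hEq⟩ := Option.map_eq_some_iff.mp hpe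
          have hEq2 : eE = (i, bb) := hEq.symm
          subst hEq2
          have hdec := R₂.par_dec _ _ hp2
          rcases hlift_ini i hi (!bb) with h | ⟨hb, hz, h2, h3⟩
          · have hterH : H.ter (i, bb) = (H₂.ter (⟨i, hi⟩, bb)).1 := h
            rw [hterH]
            have hne2 : (H₂.ter (⟨i, hi⟩, bb)).1 ≠ ℓ := (H₂.ter (⟨i, hi⟩, bb)).2
            rw [dif_neg hne2, dif_neg hv]
            have hsub : (⟨(H₂.ter (⟨i, hi⟩, bb)).1, hne2⟩ : {v : V // v ≠ ℓ}) =
                H₂.ter (⟨i, hi⟩, bb) := Subtype.ext rfl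
            rw [hsub]
            omega
          · have hterH : H.ter (i, bb) = ℓ := h3
            rw [hterH, dif_pos rfl, dif_neg hv]
            have h4 : H₂.ter (⟨i, hi⟩, bb) = ⟨a, ha⟩ := h2
            rw [h4] at hdec
            omega
      · -- covers
        rintro ⟨i, bb⟩
        by_cases hi : i = i₀
        · subst hi
          by_cases hbb : bb = bℓ
          · subst hbb
            left
            rw [hini_bℓ, dif_pos rfl]
          · have hbb2 : bb = !bℓ := bool_flip bb bℓ hbb
            subst hbb2
            right
            rw [hter_nbℓ, dif_pos rfl]
            show _ = some (H.bar (i₀, !bℓ))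
            have hbar : H.bar (i₀, !bℓ) = (i₀, bℓ) := by
              show (i₀, !(!bℓ)) = (i₀, bℓ)
              rw [Bool.not_not]
            rw [hbar]
        · rcases R₂.covers (⟨i, hi⟩, bb) with h | h
          · left
            rcases hlift_ini i hi bb with hrel | ⟨hb, hz, h2, h3⟩
            · rw [hrel]
              have hu2 : (H₂.ini (⟨i, hi⟩, bb)).1 ≠ ℓ := (H₂.ini (⟨i, hi⟩, bb)).2
              rw [dif_neg hu2]
              have hsub : (⟨(H₂.ini (⟨i, hi⟩, bb)).1, hu2⟩ : {v : V // v ≠ ℓ}) =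
                  H₂.ini (⟨i, hi⟩, bb) := Subtype.ext rfl
              rw [hsub, h]
              rfl
            · exfalso
              subst hb
              rw [h2] at h
              exact hM ⟨i, hi, h, hz⟩
          · right
            rcases hlift_ini i hi (!bb) with hrel | ⟨hb, hz, h2, h3⟩
            · have hterH : H.ter (i, bb) = (H₂.ter (⟨i, hi⟩, bb)).1 := hrel
              rw [hterH]
              have hne2 : (H₂.ter (⟨i, hi⟩, bb)).1 ≠ ℓ := (H₂.ter (⟨i, hi⟩, bb)).2
              rw [dif_neg hne2]
              have hsub : (⟨(H₂.ter (⟨i, hi⟩, bb)).1, hne2⟩ : {v : V // v ≠ ℓ}) =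
                  H₂.ter (⟨i, hi⟩, bb) := Subtype.ext rfl
              rw [hsub, h]
              rfl
            · exfalso
              have h6 : H₂.ter (⟨i, hi⟩, bb) = ⟨a, ha⟩ := h2
              rw [h6] at h
              have h8 : ((⟨i, hi⟩ : {i : ι // i ≠ i₀}), !bb) = ((⟨i, hi⟩ : {i : ι // i ≠ i₀}), true) := by
                rw [hb]
              rw [show H₂.bar (⟨i, hi⟩, bb) = ((⟨i, hi⟩ : {i : ι // i ≠ i₀}), !bb) from rfl, h8] at h
              exact hM ⟨i, hi, h, hz⟩
      · -- root_uniq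
        intro u v hu hv
        by_cases hu1 : u = ℓ
        · rw [dif_pos hu1] at hu; exact absurd hu (by simp)
        rw [dif_neg hu1] at hu
        by_cases hv1 : v = ℓ
        · rw [dif_pos hv1] at hv; exact absurd hv (by simp)
        rw [dif_neg hv1] at hv
        exact congrArg Subtype.val
          (R₂.root_uniq _ _ (Option.map_eq_none_iff.mp hu) (Option.map_eq_none_iff.mp hv))

end Statement17Core
section Statement17Pos

/-- The identity iso between `lotGraph` and its `epGraph` form. -/
def lotGraphIso (V : Type) (ed : List (V × V × V)) :
    GIso (lotGraph V ed) (epGraph (fun j : Fin ed.length => ((ed.get j).1, (ed.get j).2.1))) where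
  vE := Equiv.refl _
  eE := Equiv.refl _
  hbar := fun _ => rfl
  hini := fun _ => rfl

lemma hlenM (V : Type) (ed' : List (V × V × V)) :
    (ed'.map lotRel).length = ed'.length := List.length_map _

lemma hattL (V : Type) (ed' : List (V × V × V)) (d : (lotCpx V ed').F) :
    (lotCpx V ed').att d = lotRel (ed'.get (Fin.cast (hlenM V ed') d)) := by
  show (ed'.map lotRel).get d = _
  exact List.getElem_map _

lemma hlen4 (V : Type) (ed' : List (V × V × V)) (d : (lotCpx V ed').F) :
    ((lotCpx V ed').att d).length = 4 := by rw [hattL]; rfl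

lemma attL_getElem (V : Type) (ed' : List (V × V × V)) (d : (lotCpx V ed').F)
    (m : ℕ) (hm : m < ((lotCpx V ed').att d).length) (n : ℕ)
    (hn : n < (lotRel (ed'.get (Fin.cast (hlenM V ed') d))).length) (hEq : m = n) :
    ((lotCpx V ed').att d)[m]'hm = (lotRel (ed'.get (Fin.cast (hlenM V ed') d)))[n]'hn := by
  subst hEq
  exact List.getElem_of_eq (hattL V ed' d) hm

lemma corA_val (V : Type) (ed' : List (V × V × V)) (d : (lotCpx V ed').F)
    (i : Fin ((lotCpx V ed').att d).length) (n : ℕ)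
    (hn : n < (lotRel (ed'.get (Fin.cast (hlenM V ed') d))).length) (hEq : (i : ℕ) = n) :
    (lotCpx V ed').corA ⟨d, i⟩ = (lotRel (ed'.get (Fin.cast (hlenM V ed') d)))[n]'hn := by
  show ((lotCpx V ed').att d).get i = _
  rw [List.get_eq_getElem]
  exact attL_getElem V ed' d _ i.2 n hn hEq

lemma corB_val (V : Type) (ed' : List (V × V × V)) (d : (lotCpx V ed').F)
    (i : Fin ((lotCpx V ed').att d).length) (n : ℕ)
    (hn : n < (lotRel (ed'.get (Fin.cast (hlenM V ed') d))).length)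
    (hEq : ((i : ℕ) + 1) % ((lotCpx V ed').att d).length = n) :
    (lotCpx V ed').corB ⟨d, i⟩ = (lotRel (ed'.get (Fin.cast (hlenM V ed') d)))[n]'hn := by
  show ((lotCpx V ed').att d).get _ = _
  rw [List.get_eq_getElem]
  exact attL_getElem V ed' d _ (Nat.mod_lt _ ((lotCpx V ed').att_pos d)) n hn hEq

lemma corA_at3 (V : Type) (ed' : List (V × V × V)) (d : (lotCpx V ed').F)
    (i : Fin ((lotCpx V ed').att d).length) (hi : (i : ℕ) = 3) :
    (lotCpx V ed').corA ⟨d, i⟩ = ((ed'.get (Fin.cast (hlenM V ed') d)).2.2, false) := by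
  rw [corA_val V ed' d i 3 (by norm_num [lotRel]) hi]
  rfl

lemma corB_at3 (V : Type) (ed' : List (V × V × V)) (d : (lotCpx V ed').F)
    (i : Fin ((lotCpx V ed').att d).length) (hi : (i : ℕ) = 3) :
    (lotCpx V ed').corB ⟨d, i⟩ = ((ed'.get (Fin.cast (hlenM V ed') d)).1, true) := by
  rw [corB_val V ed' d i 0 (by norm_num [lotRel])
    (by rw [hi, hlen4])]
  rfl

lemma pos_cond (V : Type) (ed' : List (V × V × V)) (d : (lotCpx V ed').F)
    (i : Fin ((lotCpx V ed').att d).length) :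
    ((lotCpx V ed').bar ((lotCpx V ed').corA ⟨d, i⟩) ∈ {e : V × Bool | e.2 = true} ∧
      (lotCpx V ed').corB ⟨d, i⟩ ∈ {e : V × Bool | e.2 = true}) ↔ (i : ℕ) = 3 := by
  have h4 := hlen4 V ed' d
  have hiv : (i : ℕ) = 0 ∨ (i : ℕ) = 1 ∨ (i : ℕ) = 2 ∨ (i : ℕ) = 3 := by
    have := i.2; omega
  rcases hiv with h | h | h | h
  · constructor
    · rintro ⟨hc1, -⟩
      exfalso
      rw [corA_val V ed' d i 0 (by norm_num [lotRel]) h] at hc1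
      exact Bool.noConfusion (show (false : Bool) = true from hc1)
    · intro h3; exfalso; omega
  · constructor
    · rintro ⟨hc1, -⟩
      exfalso
      rw [corA_val V ed' d i 1 (by norm_num [lotRel]) h] at hc1
      exact Bool.noConfusion (show (false : Bool) = true from hc1)
    · intro h3; exfalso; omega
  · constructor
    · rintro ⟨-, hc2⟩
      exfalso
      rw [corB_val V ed' d i 3 (by norm_num [lotRel]) (by rw [h, h4])] at hc2
      exact Bool.noConfusion (show (false : Bool) = true from hc2)
    · intro h3; exfalso; omega
  · constructor
    · intro _; exact h
    · intro _
      constructor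
      · rw [corA_at3 V ed' d i h]
        rfl
      · rw [corB_at3 V ed' d i h]
        rfl

/-- The positive link of a LOT complex is isomorphic to the graph joining each label to the
source of its edge. -/
noncomputable def poslinkIso (V : Type) (ed' : List (V × V × V)) :
    GIso ((lotCpx V ed').PosLink {e : V × Bool | e.2 = true})
      (epGraph (fun j : Fin ed'.length => ((ed'.get j).2.2, (ed'.get j).1))) := by
  refine
    { vE := Equiv.ofBijective (fun s => s.1.1) ⟨?_, ?_⟩
      eE := Equiv.ofBijective
        (fun s => (Fin.cast (hlenM V ed') s.1.1.1, s.1.2)) ⟨?_, ?_⟩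
      hbar := ?_
      hini := ?_ }
  · rintro ⟨⟨v1, b1⟩, h1⟩ ⟨⟨v2, b2⟩, h2⟩ hEq
    have hv : v1 = v2 := hEq
    subst hv
    have hb1 : b1 = true := h1
    have hb2 : b2 = true := h2
    subst hb1
    subst hb2
    rfl
  · intro v
    exact ⟨⟨(v, true), rfl⟩, rfl⟩
  · rintro ⟨⟨⟨D1, i1⟩, b1⟩, h1⟩ ⟨⟨⟨D2, i2⟩, b2⟩, h2⟩ hEq
    dsimp only at hEq
    have hD : D1 = D2 := by
      have h9 : Fin.cast (hlenM V ed') D1 = Fin.cast (hlenM V ed') D2 :=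
        congrArg Prod.fst hEq
      have h10 : Fin.val D1 = Fin.val D2 := by have := congrArg Fin.val h9; exact this
      exact Fin.ext h10
    subst hD
    have hb : b1 = b2 := congrArg Prod.snd hEq
    subst hb
    have hi1 : (i1 : ℕ) = 3 := (pos_cond V ed' D1 i1).mp h1
    have hi2 : (i2 : ℕ) = 3 := (pos_cond V ed' D1 i2).mp h2
    have hi : i1 = i2 := Fin.ext (hi1.trans hi2.symm)
    subst hi
    rfl
  · rintro ⟨j, b⟩
    refine ⟨⟨((⟨Fin.cast (hlenM V ed').symm j,
        ⟨3, by have h := hlen4 V ed' (Fin.cast (hlenM V ed').symm j); omega⟩⟩ : (lotCpx V ed').Cor), b), ?_⟩, ?_⟩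
    · exact (pos_cond V ed' _ _).mpr rfl
    · show (Fin.cast (hlenM V ed') (Fin.cast (hlenM V ed').symm j), b) = (j, b)
      rfl
  · rintro ⟨⟨⟨D, i⟩, b⟩, hc⟩
    rfl
  · rintro ⟨⟨⟨D, i⟩, b⟩, hc⟩
    have hi3 : (i : ℕ) = 3 := (pos_cond V ed' D i).mp hc
    cases b with
    | true =>
      show ((lotCpx V ed').bar ((lotCpx V ed').corA ⟨D, i⟩)).1 =
        (ed'.get (Fin.cast (hlenM V ed') D)).2.2
      rw [corA_at3 V ed' D i hi3]
      rfl
    | false =>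
      show ((lotCpx V ed').corB ⟨D, i⟩).1 = (ed'.get (Fin.cast (hlenM V ed') D)).1
      rw [corB_at3 V ed' D i hi3]

end Statement17Pos
section Statement17B

/-- In a tree, a nonnegative-coefficient relation among the boundary vectors forces all
coefficients to vanish (tree edges are homologically independent). -/
lemma tree_indep {V ι : Type} [Fintype ι] (ep : ι → V × V)
    (htree : (epGraph ep).IsTree) (n : ι → ℤ)
    (heq : ∀ g : V, ∑ j, n j *
      ((if (ep j).1 = g then 1 else 0) - (if (ep j).2 = g then 1 else 0)) = 0) :
    ∀ j, n j = 0 := by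
  classical
  by_contra hcon
  push_neg at hcon
  obtain ⟨j₀, hj₀⟩ := hcon
  set G := epGraph ep with hG
  haveI : Finite G.E := inferInstanceAs (Finite (ι × Bool))
  have hj₀' : ((j₀, true) : G.E) ∈ {d : G.E | n d.1 ≠ 0} := hj₀
  obtain ⟨e, heS, huniq⟩ := exists_leaf G htree.2 {d : G.E | n d.1 ≠ 0} (j₀, true) hj₀'
  set g := G.ter e with hg
  have hini_bar : G.ini (G.bar e) = g := rfl
  have hsum := heq g
  rw [Finset.sum_eq_single e.1] at hsum
  · have hne : G.ini e ≠ g := by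
      intro hcontra
      exact G.bar_ne e (huniq e heS hcontra).symm
    obtain ⟨i, b⟩ := e
    cases b with
    | true =>
      have h1 : (ep i).1 ≠ g := hne
      have h2 : (ep i).2 = g := hini_bar
      rw [if_neg h1, if_pos h2] at hsum
      have : n i = 0 := by
        have h9 : n i * ((0 : ℤ) - 1) = -(n i) := by ring
        rw [h9] at hsum
        omega
      exact heS this
    | false =>
      have h1 : (ep i).2 ≠ g := hne
      have h2 : (ep i).1 = g := hini_bar
      rw [if_pos h2, if_neg h1] at hsum
      have : n i = 0 := by
        have h9 : n i * ((1 : ℤ) - 0) = n i := by ring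
        rw [h9] at hsum
        omega
      exact heS this
  · intro j _ hj
    by_cases hnj : n j = 0
    · rw [hnj]; ring
    · have ht1 : (ep j).1 ≠ g := by
        intro hcontra
        have hmem : ((j, true) : G.E) ∈ {d : G.E | n d.1 ≠ 0} := hnj
        have h9 := huniq (j, true) hmem hcontra
        exact hj (congrArg Prod.fst h9)
      have ht2 : (ep j).2 ≠ g := by
        intro hcontra
        have hmem : ((j, false) : G.E) ∈ {d : G.E | n d.1 ≠ 0} := hnj
        have h9 := huniq (j, false) hmem hcontra
        exact hj (congrArg Prod.fst h9)
      rw [if_neg ht1, if_neg ht2]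
      ring
  · intro h
    exact absurd (Finset.mem_univ _) h

/-- No spherical diagram maps to the LOT complex of a labeled oriented tree:
the boundary relators of a tree are independent. -/
lemma noSphere (V : Type) (ed' : List (V × V × V))
    (htree : (epGraph (fun j : Fin ed'.length =>
      ((ed'.get j).1, (ed'.get j).2.1))).IsTree)
    (C : TwoComplex) (f : CombMap C (lotCpx V ed')) (hs : C.IsSphere) : False := by
  classical
  obtain ⟨hV, hE, hF, hNe, hConn, hcor, hchi⟩ := hs
  haveI := hE
  haveI := hF
  haveI : Fintype C.E := Fintype.ofFinite _
  haveI : Fintype C.F := Fintype.ofFinite _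
  letI : Fintype C.Cor := inferInstanceAs (Fintype (Σ d : C.F, Fin (C.att d).length))
  haveI : Fintype (lotCpx V ed').F := inferInstanceAs (Fintype (Fin _))
  have hbij : Function.Bijective C.corA := by
    constructor
    · intro c c' h
      obtain ⟨cc, -, hun⟩ := hcor (C.corA c')
      rw [hun c h, hun c' rfl]
    · intro e'
      obtain ⟨c, hc, -⟩ := hcor e'
      exact ⟨c, hc⟩
  have htree2 : (epGraph (fun D : (lotCpx V ed').F =>
      ((ed'.get (Fin.cast (hlenM V ed') D)).1,
       (ed'.get (Fin.cast (hlenM V ed') D)).2.1))).IsTree := by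
    refine (epIso _ _ (finCongr (hlenM V ed').symm) ?_).isTree htree
    intro j
    rfl
  set n : (lotCpx V ed').F → ℤ :=
    fun D => (Fintype.card {d : C.F // f.mapF d = D} : ℤ) with hn
  have hkey : ∀ g : V, ∑ D : (lotCpx V ed').F, n D *
      ((if (ed'.get (Fin.cast (hlenM V ed') D)).1 = g then 1 else 0) -
       (if (ed'.get (Fin.cast (hlenM V ed') D)).2.1 = g then 1 else 0)) = 0 := by
    intro g
    set φ : V × Bool → ℤ :=
      fun vb => if vb.1 = g then (if vb.2 then 1 else -1) else 0 with hφ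
    set ψ : (lotCpx V ed').F → ℤ := fun D =>
      (if (ed'.get (Fin.cast (hlenM V ed') D)).1 = g then 1 else 0) -
      (if (ed'.get (Fin.cast (hlenM V ed') D)).2.1 = g then 1 else 0) with hψ
    -- Step A: the total φ-sum vanishes by the bar-involution
    have hA : ∑ e : C.E, φ (f.mapE e) = 0 := by
      have hinv : Function.Involutive C.bar := C.bar_bar
      have h1 : ∑ e : C.E, φ (f.mapE (C.bar e)) = ∑ e : C.E, φ (f.mapE e) :=
        Fintype.sum_bijective C.bar hinv.bijective _ _ (fun e => rfl)
      have h2 : ∀ e : C.E, φ (f.mapE (C.bar e)) = - φ (f.mapE e) := by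
        intro e
        rw [f.map_bar]
        rcases hfe : f.mapE e with ⟨v, b⟩
        show φ (v, !b) = - φ (v, b)
        by_cases hv : v = g <;> cases b <;> simp [hφ, hv]
      rw [Finset.sum_congr rfl (fun e _ => h2 e)] at h1
      rw [Finset.sum_neg_distrib] at h1
      linarith
    -- Step B: sum over corners
    have hB : ∑ e : C.E, φ (f.mapE e) = ∑ c : C.Cor, φ (f.mapE (C.corA c)) :=
      (Fintype.sum_bijective C.corA hbij _ _ (fun c => rfl)).symm
    -- Step C: fiber the corners by faces
    have hC : ∑ c : C.Cor, φ (f.mapE (C.corA c)) =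
        ∑ d : C.F, ∑ i : Fin ((C.att d).length), φ (f.mapE ((C.att d).get i)) := by
      show ∑ c : (Σ d : C.F, Fin (C.att d).length), φ (f.mapE (C.corA c)) = _
      rw [← Finset.univ_sigma_univ, Finset.sum_sigma]
      rfl
    -- Step D: each face contributes ψ of its image
    have hD : ∀ d : C.F, ∑ i : Fin ((C.att d).length), φ (f.mapE ((C.att d).get i)) =
        ψ (f.mapF d) := by
      intro d
      have hlen_d : (C.att d).length = ((lotCpx V ed').att (f.mapF d)).length := by
        rw [← f.map_att]
        exact (List.length_map _).symm
      have hmapget : ∀ i : Fin ((C.att d).length),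
          f.mapE ((C.att d).get i) =
          ((lotCpx V ed').att (f.mapF d))[(i : ℕ)]'(by rw [← hlen_d]; exact i.2) := by
        intro i
        have h1 : ((C.att d).map f.mapE)[(i : ℕ)]'(by simpa using i.2) =
            f.mapE ((C.att d).get i) := by
          rw [List.get_eq_getElem, List.getElem_map]
        rw [← h1]
        exact List.getElem_of_eq (f.map_att d) _
      have h4 : (C.att d).length = 4 := hlen_d.trans (hlen4 V ed' _)
      have hEquiv : ∑ i : Fin ((C.att d).length), φ (f.mapE ((C.att d).get i)) =
          ∑ i : Fin 4, φ (f.mapE ((C.att d).get (Fin.cast h4.symm i))) :=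
        Fintype.sum_equiv (finCongr h4) _ _
          (fun x => congrArg (fun i => φ (f.mapE ((C.att d).get i))) (Fin.ext rfl))
      rw [hEquiv, Fin.sum_univ_four]
      have hterm : ∀ (kf : Fin 4) (kk : ℕ)
          (hkl : kk < (lotRel (ed'.get (Fin.cast (hlenM V ed') (f.mapF d)))).length),
          (kf : ℕ) = kk →
          φ (f.mapE ((C.att d).get (Fin.cast h4.symm kf))) =
          φ ((lotRel (ed'.get (Fin.cast (hlenM V ed') (f.mapF d))))[kk]'hkl) := by
        intro kf kk hkl hval
        rw [hmapget]
        congr 1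
        exact attL_getElem V ed' _ _ _ kk hkl hval
      rw [hterm 0 0 (by norm_num [lotRel]) rfl,
          hterm 1 1 (by norm_num [lotRel]) rfl,
          hterm 2 2 (by norm_num [lotRel]) rfl,
          hterm 3 3 (by norm_num [lotRel]) rfl]
      set tt := ed'.get (Fin.cast (hlenM V ed') (f.mapF d)) with htt
      have e0 : (lotRel tt)[0]'(by norm_num [lotRel]) = (tt.1, true) := rfl
      have e1 : (lotRel tt)[1]'(by norm_num [lotRel]) = (tt.2.2, true) := rfl
      have e2 : (lotRel tt)[2]'(by norm_num [lotRel]) = (tt.2.1, false) := rfl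
      have e3 : (lotRel tt)[3]'(by norm_num [lotRel]) = (tt.2.2, false) := rfl
      rw [e0, e1, e2, e3]
      simp only [hψ]
      rw [← htt]
      by_cases h1 : tt.1 = g <;> by_cases h2 : tt.2.1 = g <;> by_cases h3 : tt.2.2 = g <;>
        simp [hφ, h1, h2, h3]
    -- assemble
    have hfib := Fintype.sum_fiberwise' (f.mapF) ψ
    have hconst : ∀ D : (lotCpx V ed').F,
        (∑ _i : {d : C.F // f.mapF d = D}, ψ D) = n D * ψ D := by
      intro D
      rw [Finset.sum_const, Finset.card_univ, nsmul_eq_mul]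
    calc ∑ D : (lotCpx V ed').F, n D *
        ((if (ed'.get (Fin.cast (hlenM V ed') D)).1 = g then 1 else 0) -
         (if (ed'.get (Fin.cast (hlenM V ed') D)).2.1 = g then 1 else 0))
        = ∑ D : (lotCpx V ed').F, ∑ _i : {d : C.F // f.mapF d = D}, ψ D := by
          refine Finset.sum_congr rfl (fun D _ => ?_)
          rw [hconst D]
      _ = ∑ d : C.F, ψ (f.mapF d) := hfib
      _ = ∑ d : C.F, ∑ i : Fin ((C.att d).length), φ (f.mapE ((C.att d).get i)) := by
          refine Finset.sum_congr rfl (fun d _ => ?_)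
          rw [hD d]
      _ = ∑ c : C.Cor, φ (f.mapE (C.corA c)) := hC.symm
      _ = ∑ e : C.E, φ (f.mapE e) := hB.symm
      _ = 0 := hA
  have hzero := tree_indep _ htree2 n hkey
  obtain ⟨d₀⟩ := hNe
  have hpos : 0 < Fintype.card {d : C.F // f.mapF d = f.mapF d₀} :=
    Fintype.card_pos_iff.mpr ⟨⟨d₀, rfl⟩⟩
  have h0 := hzero (f.mapF d₀)
  simp only [hn] at h0
  omega

end Statement17B
/-- Every labeled oriented tree `Γ` admits a reorientation `Γ′` (reversing
some edges) such that the positive link of `K(Γ′)` is a tree; consequently `K(Γ′)` is DR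
directed away from any single one of its edges. -/
theorem lot_reorientation_posLink_tree (V : Type) [Finite V]
    (ed : List (V × V × V)) (hlot : IsLOT V ed) :
    ∃ ed' : List (V × V × V),
      List.Forall₂ (fun e e' => e' = e ∨ e' = (e.2.1, e.1, e.2.2)) ed ed' ∧
      ((lotCpx V ed').PosLink {e : V × Bool | e.2 = true}).IsTree ∧
      ∀ x : V, DRdirAway (lotCpx V ed') {e : V × Bool | e.1 = x} := by
  classical
  set ep : Fin ed.length → V × V := fun j => ((ed.get j).1, (ed.get j).2.1) with hepdef
  set z : Fin ed.length → V := fun j => (ed.get j).2.2 with hzdef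
  have htreeEp : (epGraph ep).IsTree := (lotGraphIso V ed).isTree hlot
  obtain ⟨w, hw, ⟨R⟩⟩ :=
    core_orient ed.length V (Fin ed.length) inferInstance ep z (by simp) htreeEp
  set F : Fin ed.length → V × V × V := fun j =>
    if w j = (ed.get j).1 then ed.get j else ((ed.get j).2.1, (ed.get j).1, (ed.get j).2.2)
    with hFdef
  have hlen' : ed.length = (List.ofFn F).length := (List.length_ofFn (f := F)).symm
  have key : ∀ j : Fin ed.length, (List.ofFn F).get (Fin.cast hlen' j) = F j := by
    intro j
    rw [List.get_ofFn]
    exact congrArg F (Fin.ext rfl)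
  refine ⟨List.ofFn F, ?_, ?_, ?_⟩
  · -- the reorientation relation
    rw [List.forall₂_iff_get]
    refine ⟨by simp, ?_⟩
    intro i h1 h2
    rw [List.get_ofFn]
    simp only [hFdef]
    split
    · left; rfl
    · right; rfl
  · -- the positive link is a tree
    have htreeW : (epGraph (fun j : Fin ed.length => (z j, w j))).IsTree := R.isTree
    have htreeT : (epGraph (fun j : Fin (List.ofFn F).length =>
        (((List.ofFn F).get j).2.2, ((List.ofFn F).get j).1))).IsTree := by
      refine (epIso _ _ (finCongr hlen') ?_).isTree htreeW
      intro j
      rw [show (finCongr hlen') j = Fin.cast hlen' j from rfl, key j]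
      simp only [hFdef]
      by_cases h : w j = (ed.get j).1
      · rw [if_pos h, h]
      · rw [if_neg h]
        rcases hw j with h1 | h2
        · exact absurd h1 h
        · rw [show w j = (ed.get j).2.1 from h2]
    exact ((poslinkIso V (List.ofFn F)).symm).isTree htreeT
  · -- DR directed away from each edge: no spherical diagrams exist at all
    intro x C f hs hx
    exfalso
    have htreeKL : (epGraph (fun j : Fin (List.ofFn F).length =>
        (((List.ofFn F).get j).1, ((List.ofFn F).get j).2.1))).IsTree := by
      refine (epIsoFlip ep _ (finCongr hlen')
        (fun j => if w j = (ed.get j).1 then false else true) ?_).isTree htreeEp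
      intro j
      rw [show (finCongr hlen') j = Fin.cast hlen' j from rfl, key j]
      simp only [hFdef, hepdef]
      split
      · simp
      · simp [Prod.swap]
    exact noSphere V (List.ofFn F) htreeKL C f hs
end
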